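/- arXiv:1210.7269 — 4 statements merged into one kernel-verified Lean document; each statement's English description precedes it below -/
import Mathlib

section
/- Let G be a graph and F be a k-forcer connecting v ∈ V(G), where k ≥ 2. Then: (i) no induced K_{k+2} or C_4 of G contains a vertex of F; (ii) for every k-list assignment L of G there is an L-admissible color for v; and (iii) every k-list assignment L of G \ F can be extended into a k-list assignment of G in which v has a unique L-admissible color. -/
variable {V : Type*}

/-- A set of vertices is monochromatic under the coloring `ρ`. -/
def Mono (ρ : V → ℕ) (W : Set V) : Prop := ∀ x ∈ W, ∀ y ∈ W, ρ x = ρ y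

/-- `S` is an independent set of `G`. -/
def IndepSet (G : SimpleGraph V) (S : Set V) : Prop := ∀ x ∈ S, ∀ y ∈ S, ¬G.Adj x y

/-- `W` is a star of `G` with center `v` (it induces a `K_{1,m}` with `m ≥ 1`). -/
def IsStarC (G : SimpleGraph V) (v : V) (W : Set V) : Prop :=
  v ∈ W ∧ (W \ {v}).Nonempty ∧ (∀ u ∈ W \ {v}, G.Adj v u) ∧ IndepSet G (W \ {v})

/-- `W` is a star of `G`. -/
def IsStar (G : SimpleGraph V) (W : Set V) : Prop := ∃ v, IsStarC G v W

/-- `W` is a maximal star of `G`. -/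
def IsMaxStar (G : SimpleGraph V) (W : Set V) : Prop :=
  IsStar G W ∧ ∀ W', IsStar G W' → W ⊆ W' → W' = W

/-- `W` is a biclique of `G` (it induces a complete bipartite graph). -/
def IsBiclique (G : SimpleGraph V) (W : Set V) : Prop :=
  ∃ S T : Set V, S.Nonempty ∧ T.Nonempty ∧ Disjoint S T ∧ S ∪ T = W ∧
    (∀ s ∈ S, ∀ t ∈ T, G.Adj s t) ∧ IndepSet G S ∧ IndepSet G T

/-- `W` is a maximal biclique of `G`. -/
def IsMaxBiclique (G : SimpleGraph V) (W : Set V) : Prop :=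
  IsBiclique G W ∧ ∀ W', IsBiclique G W' → W ⊆ W' → W' = W

/-- A star coloring: no maximal star is monochromatic. -/
def StarColoring (G : SimpleGraph V) (ρ : V → ℕ) : Prop :=
  ∀ W, IsMaxStar G W → ¬Mono ρ W

/-- A biclique coloring: no maximal biclique is monochromatic. -/
def BicliqueColoring (G : SimpleGraph V) (ρ : V → ℕ) : Prop :=
  ∀ W, IsMaxBiclique G W → ¬Mono ρ W

/-- A star `k`-coloring uses colors `{1, …, k}`. -/
def StarKColoring (G : SimpleGraph V) (k : ℕ) (ρ : V → ℕ) : Prop :=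
  (∀ x, ρ x ∈ Set.Icc 1 k) ∧ StarColoring G ρ

/-- A biclique `k`-coloring uses colors `{1, …, k}`. -/
def BicliqueKColoring (G : SimpleGraph V) (k : ℕ) (ρ : V → ℕ) : Prop :=
  (∀ x, ρ x ∈ Set.Icc 1 k) ∧ BicliqueColoring G ρ

/-- A `k`-list assignment: each vertex gets a list of exactly `k` colors. -/
def IsListAssignment (L : V → Set ℕ) (k : ℕ) : Prop := ∀ v, (L v).Finite ∧ (L v).ncard = k

/-- An `L`-coloring: each vertex gets a color from its own list. -/
def IsLColoring (L : V → Set ℕ) (ρ : V → ℕ) : Prop := ∀ v, ρ v ∈ L v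

/-- `G` is star `k`-choosable. -/
def StarChoosable (G : SimpleGraph V) (k : ℕ) : Prop :=
  ∀ L : V → Set ℕ, IsListAssignment L k → ∃ ρ, IsLColoring L ρ ∧ StarColoring G ρ

/-- `G` is biclique `k`-choosable. -/
def BicliqueChoosable (G : SimpleGraph V) (k : ℕ) : Prop :=
  ∀ L : V → Set ℕ, IsListAssignment L k → ∃ ρ, IsLColoring L ρ ∧ BicliqueColoring G ρ

/-- The star chromatic number `χ_S`. -/
noncomputable def starChromaticNumber (G : SimpleGraph V) : ℕ :=
  sInf {k | ∃ ρ, StarKColoring G k ρ}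

/-- The biclique chromatic number `χ_B`. -/
noncomputable def bicliqueChromaticNumber (G : SimpleGraph V) : ℕ :=
  sInf {k | ∃ ρ, BicliqueKColoring G k ρ}

/-- The star choice number `ch_S`. -/
noncomputable def starChoiceNumber (G : SimpleGraph V) : ℕ := sInf {k | StarChoosable G k}

/-- The biclique choice number `ch_B`. -/
noncomputable def bicliqueChoiceNumber (G : SimpleGraph V) : ℕ := sInf {k | BicliqueChoosable G k}

/-- `l` is a leaf (degree-one vertex) whose unique neighbor is `v`. -/
def IsLeafAt (G : SimpleGraph V) (l v : V) : Prop := G.neighborSet l = {v}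

/-- `v` is a leafed vertex: some leaf is adjacent to it. -/
def IsLeafed (G : SimpleGraph V) (v : V) : Prop := ∃ l, IsLeafAt G l v

/-- `S` induces a cycle `C_n` in `G`. -/
def IsInducedCycle (G : SimpleGraph V) (n : ℕ) (S : Set V) : Prop :=
  ∃ f : ZMod n → V, Function.Injective f ∧ Set.range f = S ∧
    ∀ i j : ZMod n, G.Adj (f i) (f j) ↔ (j = i + 1 ∨ i = j + 1)

/-- `S` induces a hole (chordless cycle of length at least 4) in `G`. -/
def IsHole (G : SimpleGraph V) (S : Set V) : Prop := ∃ n, 4 ≤ n ∧ IsInducedCycle G n S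

/-- `S` induces a complete graph `K_m` in `G`. -/
def IsInducedComplete (G : SimpleGraph V) (m : ℕ) (S : Set V) : Prop :=
  G.IsClique S ∧ S.Finite ∧ S.ncard = m

/-- The closed neighborhood `N[v]`. -/
def closedNbhd (G : SimpleGraph V) (v : V) : Set V := insert v (G.neighborSet v)

/-- `v` and `w` are twins: `N[v] = N[w]`. -/
def Twins (G : SimpleGraph V) (v w : V) : Prop := closedNbhd G v = closedNbhd G w

/-- `w` and `z` are twins in the subgraph of `G` induced by `A`. -/
def TwinsIn (G : SimpleGraph V) (A : Set V) (w z : V) : Prop :=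
  ∀ y ∈ A, ((y = w ∨ G.Adj y w) ↔ (y = z ∨ G.Adj y z))

/-- `w` dominates `v`: `N[v] ⊆ N[w]`. -/
def Dominates (G : SimpleGraph V) (w v : V) : Prop := closedNbhd G v ⊆ closedNbhd G w

/-- `K` is a `k`-keeper connecting `v` and `w`. -/
def IsKeeper (G : SimpleGraph V) (k : ℕ) (v w : V) (K : Set V) : Prop :=
  v ∉ K ∧ w ∉ K ∧
  ∃ (d : Fin (k - 1) → V) (C : Fin (k - 1) → Set V),
    Function.Injective d ∧
    (∀ i, (C i).Finite ∧ (C i).ncard = k) ∧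
    (∀ i j, d i ∉ C j) ∧
    (∀ i j, i ≠ j → Disjoint (C i) (C j)) ∧
    K = Set.range d ∪ ⋃ i, C i ∧
    G.IsClique (Set.range d ∪ {v, w}) ∧
    (∀ i, G.IsClique (insert (d i) (C i))) ∧
    (∀ x ∈ K, ∀ y, G.Adj x y →
      (x ∈ Set.range d ∧ y ∈ Set.range d ∪ {v, w}) ∨
      (∃ i, x ∈ insert (d i) (C i) ∧ y ∈ insert (d i) (C i)))

/-- `C` is a `k`-switcher connecting `U`. -/
def IsSwitcher (G : SimpleGraph V) (k : ℕ) (U C : Set V) : Prop :=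
  Disjoint C U ∧ C.Finite ∧ C.ncard = k ∧
  (∀ u ∈ U, G.IsClique (insert u C)) ∧
  (∀ x ∈ C, ∀ y, G.Adj x y → y ∈ C ∪ U)

/-- `S` is a long `k`-switcher connecting `W`. -/
def IsLongSwitcher (G : SimpleGraph V) (k : ℕ) (W S : Set V) : Prop :=
  ∃ (h : ℕ) (w u : ℕ → V) (C : Set V) (Q : ℕ → Set V),
    2 ≤ h ∧
    Set.InjOn w (Set.Icc 1 h) ∧ w '' Set.Icc 1 h = W ∧
    Set.InjOn u (Set.Icc 1 h) ∧
    (∀ i ∈ Set.Icc 1 h, IsLeafed G (u i)) ∧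
    IndepSet G (u '' Set.Icc 1 h) ∧
    IsSwitcher G k (u '' Set.Icc 1 h) C ∧
    (∀ i ∈ Set.Icc 1 h, IsKeeper G k (w i) (u i) (Q i)) ∧
    S = u '' Set.Icc 1 h ∪ C ∪ ⋃ i ∈ Set.Icc 1 h, Q i ∧
    Disjoint (u '' Set.Icc 1 h) C ∧
    (∀ i ∈ Set.Icc 1 h, Disjoint (u '' Set.Icc 1 h) (Q i)) ∧
    (∀ i ∈ Set.Icc 1 h, Disjoint C (Q i)) ∧
    (∀ i ∈ Set.Icc 1 h, ∀ j ∈ Set.Icc 1 h, i ≠ j → Disjoint (Q i) (Q j)) ∧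
    Disjoint S W ∧
    (∀ i ∈ Set.Icc 1 h, ∀ y, G.Adj (u i) y → y ∈ C ∪ Q i ∨ IsLeafAt G y (u i))

/-- `K` is an `ℓ`-cluster connecting `⟨s, X, −X⟩`, where `X = range x` and `−X = range mx`. -/
def IsCluster (G : SimpleGraph V) (ℓ : ℕ) (s : V) (x mx : ZMod ℓ → V) (K : Set V) : Prop :=
  2 ≤ ℓ ∧
  ∃ vc : ZMod ℓ → V,
    Function.Injective x ∧ Function.Injective mx ∧ Function.Injective vc ∧
    Set.range vc = K ∧
    Disjoint (Set.range x) (Set.range mx) ∧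
    Disjoint (Set.range x) K ∧ Disjoint (Set.range mx) K ∧
    s ∉ Set.range x ∪ Set.range mx ∪ K ∧
    (∀ i, IsLeafed G (vc i)) ∧
    (∀ i, G.Adj s (x i)) ∧ (∀ i, G.Adj s (mx i)) ∧ (∀ i, G.Adj s (vc i)) ∧
    (∀ i, G.Adj (x i) (mx i)) ∧ (∀ i, G.Adj (mx i) (vc i)) ∧ (∀ i, G.Adj (vc i) (x (i + 1))) ∧
    (∀ i j, ¬G.Adj (x i) (x j)) ∧ (∀ i j, ¬G.Adj (mx i) (mx j)) ∧
    (∀ i j, ¬G.Adj (vc i) (vc j)) ∧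
    (∀ i j, G.Adj (x i) (mx j) → i = j) ∧
    (∀ i j, G.Adj (mx i) (vc j) → i = j) ∧
    (∀ i j, G.Adj (vc i) (x j) → j = i + 1) ∧
    (∀ i, ∀ y, G.Adj (vc i) y → y = s ∨ y = mx i ∨ y = x (i + 1) ∨ IsLeafAt G y (vc i))

/-- `S` is a list switcher connecting `W`. -/
def IsListSwitcher (G : SimpleGraph V) (W S : Set V) : Prop :=
  ∃ (h : ℕ) (w u : ℕ → V) (C : Set V),
    2 ≤ h ∧
    Set.InjOn w (Set.Icc 1 h) ∧ w '' Set.Icc 1 h = W ∧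
    Set.InjOn u (Set.Icc 1 h) ∧
    IndepSet G (u '' Set.Icc 1 h) ∧
    IsSwitcher G 2 (u '' Set.Icc 1 h) C ∧
    S = u '' Set.Icc 1 h ∪ C ∧
    Disjoint (u '' Set.Icc 1 h) C ∧
    Disjoint S W ∧
    (∀ i ∈ Set.Icc 1 h, G.Adj (w i) (u i)) ∧
    (∀ i ∈ Set.Icc 1 h, ∀ y, G.Adj (u i) y → y ∈ C ∨ y = w i)

/-- `F` is a `k`-forcer connecting `v`. -/
def IsForcer (G : SimpleGraph V) (k : ℕ) (v : V) (F : Set V) : Prop :=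
  ∃ (A B : Set V) (C : V → V → Set V),
    A.Finite ∧ A.ncard = k - 1 ∧ B.Finite ∧ B.ncard = k ^ k - 1 ∧
    (∀ a ∈ A, IsLeafed G a) ∧ (∀ b ∈ B, IsLeafed G b) ∧
    v ∉ A ∧ v ∉ B ∧ Disjoint A B ∧
    (∀ a ∈ insert v A, ∀ b ∈ B, ¬G.Adj a b ∧ IsSwitcher G k {a, b} (C a b)) ∧
    (∀ a ∈ insert v A, ∀ b ∈ B, ∀ a' ∈ insert v A, ∀ b' ∈ B,
      (a ≠ a' ∨ b ≠ b') → Disjoint (C a b) (C a' b')) ∧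
    (∀ a ∈ insert v A, ∀ b ∈ B, Disjoint (C a b) (insert v (A ∪ B))) ∧
    F = A ∪ B ∪ ⋃ a ∈ insert v A, ⋃ b ∈ B, C a b ∧
    (∀ x ∈ A ∪ B, ∀ y, G.Adj x y →
      (∃ a ∈ insert v A, ∃ b ∈ B, (x = a ∨ x = b) ∧ y ∈ C a b) ∨ IsLeafAt G y x)

/-- Given a `k`-forcer `F` connecting `v` and a list assignment `L`, the color `c` is
`L`-admissible for `v`. -/
def LAdmissible (G : SimpleGraph V) (F : Set V) (L : V → Set ℕ) (v : V) (c : ℕ) : Prop :=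
  c ∈ L v ∧ ∃ ρ : V → ℕ, IsLColoring L ρ ∧ ρ v = c ∧
    ∀ f ∈ F, ∀ W, IsMaxStar G W → IsStarC G f W → ¬Mono ρ W

/-- The vertices `a, b, c, d` induce a diamond with universal vertices `a, b`. -/
def IsInducedDiamond (G : SimpleGraph V) (a b c d : V) : Prop :=
  a ≠ b ∧ a ≠ c ∧ a ≠ d ∧ b ≠ c ∧ b ≠ d ∧ c ≠ d ∧
  G.Adj a b ∧ G.Adj a c ∧ G.Adj a d ∧ G.Adj b c ∧ G.Adj b d ∧ ¬G.Adj c d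

/-- `G` contains an induced 4-wheel `W_4`. -/
def HasInducedW4 (G : SimpleGraph V) : Prop :=
  ∃ u a b c d : V, [u, a, b, c, d].Pairwise (· ≠ ·) ∧
    G.Adj u a ∧ G.Adj u b ∧ G.Adj u c ∧ G.Adj u d ∧
    G.Adj a b ∧ G.Adj b c ∧ G.Adj c d ∧ G.Adj d a ∧ ¬G.Adj a c ∧ ¬G.Adj b d

/-- `G` contains an induced dart. -/
def HasInducedDart (G : SimpleGraph V) : Prop :=
  ∃ a b c d e : V, [a, b, c, d, e].Pairwise (· ≠ ·) ∧
    IsInducedDiamond G a b c d ∧ G.Adj a e ∧ ¬G.Adj b e ∧ ¬G.Adj c e ∧ ¬G.Adj d e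

/-- `G` contains an induced gem. -/
def HasInducedGem (G : SimpleGraph V) : Prop :=
  ∃ u p₁ p₂ p₃ p₄ : V, [u, p₁, p₂, p₃, p₄].Pairwise (· ≠ ·) ∧
    G.Adj u p₁ ∧ G.Adj u p₂ ∧ G.Adj u p₃ ∧ G.Adj u p₄ ∧
    G.Adj p₁ p₂ ∧ G.Adj p₂ p₃ ∧ G.Adj p₃ p₄ ∧ ¬G.Adj p₁ p₃ ∧ ¬G.Adj p₁ p₄ ∧ ¬G.Adj p₂ p₄

/-- `v` is block separable. -/
def BlockSeparable (G : SimpleGraph V) (v : V) : Prop :=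
  ∀ w ∈ G.neighborSet v, ∀ z ∈ G.neighborSet v, G.Adj w z →
    ¬Dominates G w v → ¬Dominates G z v → TwinsIn G (closedNbhd G v) w z

/-- `B` is a block (a maximal set of pairwise twins) of the subgraph of `G` induced by `A`. -/
def IsBlockOf (G : SimpleGraph V) (A B : Set V) : Prop :=
  B ⊆ A ∧ B.Nonempty ∧ (∀ p ∈ B, ∀ q ∈ B, TwinsIn G A p q) ∧
  ∀ B', B' ⊆ A → (∀ p ∈ B', ∀ q ∈ B', TwinsIn G A p q) → B ⊆ B' → B' = B

/-- `B` is a block of `G`. -/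
def IsBlock (G : SimpleGraph V) (B : Set V) : Prop := IsBlockOf G Set.univ B

/-- `B 0, …, B ℓ` is the block separation of `v`. -/
def IsBlockSeparation (G : SimpleGraph V) (v : V) (ℓ : ℕ) (B : ℕ → Set V) : Prop :=
  v ∈ B 0 ∧
  (∀ i ≤ ℓ, IsBlockOf G (closedNbhd G v) (B i)) ∧
  (∀ i ≤ ℓ, ∀ j ≤ ℓ, i ≠ j → Disjoint (B i) (B j)) ∧
  (⋃ i ∈ Set.Iic ℓ, B i) = closedNbhd G v ∧
  (∀ i, 1 ≤ i → i ≤ ℓ → ∀ j, 1 ≤ j → j ≤ ℓ → i ≠ j → ∀ a ∈ B i, ∀ b ∈ B j, ¬G.Adj a b)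

/-- `S` is a diamond `k`-switcher connecting `U`. -/
def IsDiamondSwitcher (G : SimpleGraph V) (k : ℕ) (U S : Set V) : Prop :=
  ∃ (h : ℕ) (u w : ℕ → V) (Q : ℕ → Set V) (C : Set V),
    2 ≤ h ∧
    Set.InjOn u (Set.Icc 1 h) ∧ u '' Set.Icc 1 h = U ∧
    Set.InjOn w (Set.Icc 1 h) ∧
    (∀ i, 2 ≤ i → i ≤ h → IsLeafed G (w i)) ∧
    C.Finite ∧ C.ncard = k ∧
    G.IsClique (insert (w 1) C) ∧
    (∀ i, 2 ≤ i → i ≤ h → G.Adj (w 1) (w i)) ∧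
    (∀ i j, 2 ≤ i → i ≤ h → 2 ≤ j → j ≤ h → ¬G.Adj (w i) (w j)) ∧
    (∀ i ∈ Set.Icc 1 h, IsKeeper G k (u i) (w i) (Q i)) ∧
    S = w '' Set.Icc 1 h ∪ C ∪ ⋃ i ∈ Set.Icc 1 h, Q i ∧
    Disjoint (w '' Set.Icc 1 h) C ∧
    (∀ i ∈ Set.Icc 1 h, Disjoint (w '' Set.Icc 1 h) (Q i)) ∧
    (∀ i ∈ Set.Icc 1 h, Disjoint C (Q i)) ∧
    (∀ i ∈ Set.Icc 1 h, ∀ j ∈ Set.Icc 1 h, i ≠ j → Disjoint (Q i) (Q j)) ∧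
    Disjoint S U ∧
    (∀ y, G.Adj (w 1) y → y ∈ C ∨ (∃ i, 2 ≤ i ∧ i ≤ h ∧ y = w i) ∨ y ∈ Q 1) ∧
    (∀ i, 2 ≤ i → i ≤ h → ∀ y, G.Adj (w i) y → y = w 1 ∨ y ∈ Q i ∨ IsLeafAt G y (w i)) ∧
    (∀ x ∈ C, ∀ y, G.Adj x y → y ∈ C ∨ y = w 1)

/-- `S` is a split `k`-switcher connecting `W`, with respect to the split partition
`(Sg, Qg)` of `G`. -/
def IsSplitSwitcher (G : SimpleGraph V) (Sg Qg : Set V) (k : ℕ) (W S : Set V) : Prop :=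
  ∃ (X Y : Set V) (a₁ a₂ : V),
    X ⊆ Qg ∧ Y ⊆ Qg ∧ a₁ ∈ Sg ∧ a₂ ∈ Sg ∧ a₁ ≠ a₂ ∧
    X.Finite ∧ X.ncard = k ∧ Y.Finite ∧ Y.ncard = k ∧ Disjoint X Y ∧
    a₁ ∉ X ∪ Y ∧ a₂ ∉ X ∪ Y ∧
    S = X ∪ Y ∪ {a₁, a₂} ∧ Disjoint S W ∧
    (∀ v ∈ W ∪ {a₁, a₂}, G.IsClique (insert v X)) ∧
    G.IsClique (insert a₁ Y) ∧ G.IsClique (insert a₂ Y) ∧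
    (∀ x ∈ X ∪ Y, ∀ y ∈ Sg, G.Adj x y →
      ((x ∈ X ∧ (y ∈ W ∨ y = a₁ ∨ y = a₂)) ∨ (x ∈ Y ∧ (y = a₁ ∨ y = a₂)))) ∧
    (∀ y, G.Adj a₁ y → y ∈ X ∪ Y) ∧
    (∀ y, G.Adj a₂ y → y ∈ X ∪ Y)

/-- `G` together with the vertex partition `QB 1, …, QB (r+1), SB 1, …, SB r` realizes the
threshold representation `(q, s)`. -/
def IsThresholdRealization (G : SimpleGraph V) (r : ℕ) (q s : ℕ → ℕ)
    (QB SB : ℕ → Set V) : Prop :=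
  (∀ i ∈ Set.Icc 1 (r + 1), (QB i).Finite ∧ (QB i).ncard = q i) ∧
  (∀ i ∈ Set.Icc 1 r, (SB i).Finite ∧ (SB i).ncard = s i) ∧
  (∀ i ∈ Set.Icc 1 (r + 1), ∀ j ∈ Set.Icc 1 (r + 1), i ≠ j → Disjoint (QB i) (QB j)) ∧
  (∀ i ∈ Set.Icc 1 r, ∀ j ∈ Set.Icc 1 r, i ≠ j → Disjoint (SB i) (SB j)) ∧
  (∀ i ∈ Set.Icc 1 (r + 1), ∀ j ∈ Set.Icc 1 r, Disjoint (QB i) (SB j)) ∧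
  ((⋃ i ∈ Set.Icc 1 (r + 1), QB i) ∪ ⋃ i ∈ Set.Icc 1 r, SB i) = Set.univ ∧
  (∀ a b : V, G.Adj a b ↔ a ≠ b ∧
    ((∃ i ∈ Set.Icc 1 (r + 1), ∃ j ∈ Set.Icc 1 (r + 1),
        ((a ∈ QB i ∧ b ∈ QB j) ∨ (b ∈ QB i ∧ a ∈ QB j))) ∨
     (∃ i ∈ Set.Icc 1 r, ∃ j ∈ Set.Icc 1 r, i ≤ j ∧
        ((a ∈ QB i ∧ b ∈ SB j) ∨ (b ∈ QB i ∧ a ∈ SB j)))))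

/-- The index `i` of `Q` is `k`-forbidden for the threshold representation `(q, s)`. -/
def KForbiddenIndex (k r : ℕ) (q s : ℕ → ℕ) (i : ℕ) : Prop :=
  k < q i ∨ (q i = k ∧ ∃ j, i < j ∧ j ≤ r + 1 ∧ q j = k ∧
    (∀ h, i < h → h < j → q h = k - 1) ∧ ∀ h, i ≤ h → h < j → s h = 1)

/-- `G` realizes the netblock representation `(T, wt)`, where `VT` is the vertex set of the
tree `T` and `B v w` is the clique inserted for the tree edge `vw`. -/
def IsNetblockRealization (G T : SimpleGraph V) (VT : Set V)
    (wt : V → V → ℕ) (B : V → V → Set V) : Prop :=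
  (∀ v w, T.Adj v w → v ∈ VT ∧ w ∈ VT) ∧
  (T.induce VT).IsTree ∧
  (∀ v w, wt v w = wt w v) ∧
  (∀ v w, B v w = B w v) ∧
  (∀ v w, T.Adj v w → (B v w).Finite ∧ (B v w).ncard = wt v w) ∧
  (∀ v w, T.Adj v w → Disjoint (B v w) VT) ∧
  (∀ v w v' w', T.Adj v w → T.Adj v' w' → ¬(v = v' ∧ w = w') → ¬(v = w' ∧ w = v') →
    Disjoint (B v w) (B v' w')) ∧
  {a | a ∈ VT ∨ ∃ v w, T.Adj v w ∧ a ∈ B v w} = Set.univ ∧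
  (∀ a b, G.Adj a b ↔ a ≠ b ∧ ∃ v w, T.Adj v w ∧
    a ∈ insert v (insert w (B v w)) ∧ b ∈ insert v (insert w (B v w)))

/-- `R` is the vertex set of a `k`-subtree of the netblock representation `(T, wt)`. -/
def IsKSubtree (T : SimpleGraph V) (VT : Set V) (wt : V → V → ℕ) (k : ℕ) (R : Set V) : Prop :=
  R ⊆ VT ∧ R.Nonempty ∧ (T.induce R).Connected ∧
  ∀ v ∈ R, ∀ w ∈ R, T.Adj v w → wt v w = k

/-- `R` is the vertex set of a maximal `k`-subtree of `(T, wt)`: its edge set is not properly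
included in the edge set of another `k`-subtree. -/
def IsMaxKSubtree (T : SimpleGraph V) (VT : Set V) (wt : V → V → ℕ) (k : ℕ) (R : Set V) :
    Prop :=
  IsKSubtree T VT wt k R ∧
  ∀ R', IsKSubtree T VT wt k R' →
    (∀ v ∈ R, ∀ w ∈ R, T.Adj v w → v ∈ R' ∧ w ∈ R') →
    (∀ v ∈ R', ∀ w ∈ R', T.Adj v w → v ∈ R ∧ w ∈ R)

/-- `v` is a `k`-exit vertex of `(T, wt)`. -/
def IsExitVertex (T : SimpleGraph V) (wt : V → V → ℕ) (k : ℕ) (v : V) : Prop :=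
  ∃ w, T.Adj v w ∧ wt v w < k

/-!
Every vertex of `F` lies in a switcher `C a b` or is an end of one, and the closed neighbourhood
of a switcher vertex is `C a b ∪ {a, b}` with `a, b` non-adjacent. This confines a clique or an
induced `C₄` meeting `F` to a single switcher plus one of its ends, which gives (i).

The maximal stars centred in `C a b` are its edges and the triples `{c, a, b}`, and a maximal
star centred in `A ∪ B` contains the leaves there. Hence an `L`-colouring with no monochromatic
maximal star centred in `F` exists as soon as a colouring `φ` of `insert v A` is blocked by no
`b ∈ B`, i.e. `L b ⊄ φ '' insert v A`: colour `b` outside `φ '' insert v A`, each switcher by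
distinct representatives, and recolour the leaves. For (ii): if two lists on `insert v A` meet,
a non-injective `φ` is blocked by nobody; otherwise each `b` blocks at most one of the `k ^ k`
choices of `φ`, and `B` has only `k ^ k - 1` vertices. For (iii): give `insert v A` disjoint
lists and let the vertices of `B` and their switchers block all choices but one. A colouring
blocked by `b` cannot be admissible: `ρ b = ρ a` for some `a`, and the injective colouring of
`C a b` from the `k`-list `L b` then hits `ρ a`, so some `{c, a, b}` is monochromatic.
-/

theorem Set.PairwiseDisjoint.exists_eqOn {ι α β : Type*} {s : Set ι} {t : ι → Set α}
    (ht : s.PairwiseDisjoint t) (f : ι → α → β) (g : α → β) :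
    ∃ h : α → β, (∀ i ∈ s, Set.EqOn h (f i) (t i)) ∧ ∀ x, (∀ i ∈ s, x ∉ t i) → h x = g x := by
  classical
  refine ⟨fun x => if hx : ∃ i ∈ s, x ∈ t i then f hx.choose x else g x,
    fun i hi x hx => ?_, fun x hx => dif_neg (by simpa using hx)⟩
  have hx' : ∃ i ∈ s, x ∈ t i := ⟨i, hi, hx⟩
  obtain ⟨hi', hxi'⟩ := hx'.choose_spec
  simp only [dif_pos hx', ht.elim hi' hi (Set.not_disjoint_iff.2 ⟨x, hxi', hx⟩)]

theorem exists_injOn_forall_mem {α β : Type*} [Nonempty β] {s : Set α} {L : α → Set β}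
    (hs : s.Finite) (hL : ∀ a ∈ s, (L a).Finite ∧ s.ncard ≤ (L a).ncard) :
    ∃ σ : α → β, Set.InjOn σ s ∧ ∀ a ∈ s, σ a ∈ L a := by
  classical
  have := hs.fintype
  obtain ⟨σ, hσ, hσL⟩ := (Finset.all_card_le_biUnion_card_iff_exists_injective
    fun a : s => (hL a a.2).1.toFinset).1 fun t => by
      obtain rfl | ⟨a, ha⟩ := t.eq_empty_or_nonempty
      · simp
      calc t.card ≤ s.ncard := by
            rw [← Nat.card_coe_set_eq, Nat.card_eq_fintype_card]; exact t.card_le_univ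
        _ ≤ (L a).ncard := (hL a a.2).2
        _ = ((hL a a.2).1.toFinset).card := Set.ncard_eq_toFinset_card _ _
        _ ≤ _ := Finset.card_le_card
              (Finset.subset_biUnion_of_mem (fun a : s => (hL a a.2).1.toFinset) ha)
  refine ⟨fun x => if hx : x ∈ s then σ ⟨x, hx⟩ else Classical.arbitrary β,
    fun x hx y hy hxy => ?_, fun x hx => ?_⟩
  · exact congrArg Subtype.val (hσ (by simpa [hx, hy] using hxy))
  · simpa [hx] using hσL ⟨x, hx⟩

section Tuples

variable {α β : Type*} {s : Set α} {L : α → Set β}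

theorem Nat.card_pi_eq_pow_ncard {k : ℕ} (hs : s.Finite) (hL : ∀ a ∈ s, (L a).ncard = k) :
    Nat.card ((a : s) → L a) = k ^ s.ncard := by
  have := hs.fintype
  rw [Nat.card_pi,
    Finset.prod_congr rfl fun (a : s) _ => (Nat.card_coe_set_eq (L a)).trans (hL a a.2),
    Finset.prod_const, Finset.card_univ, ← Nat.card_eq_fintype_card, Nat.card_coe_set_eq]

theorem Set.PairwiseDisjoint.injective_val_tuple (hd : s.PairwiseDisjoint L)
    (ψ : (a : s) → L a) : Function.Injective fun a => (ψ a : β) := by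
  intro a a' hψ
  refine Subtype.ext (hd.elim a.2 a'.2 (Set.not_disjoint_iff.2 ⟨ψ a, (ψ a).2, ?_⟩))
  simp only at hψ
  exact hψ ▸ (ψ a').2

theorem Set.PairwiseDisjoint.injective_range_tuple (hd : s.PairwiseDisjoint L) :
    Function.Injective fun ψ : (a : s) → L a => Set.range fun a => (ψ a : β) := by
  intro ψ ψ' hψ
  replace hψ : (Set.range fun a => (ψ a : β)) = Set.range fun a => (ψ' a : β) := hψ
  funext a
  obtain ⟨a', ha'⟩ : (ψ a : β) ∈ Set.range fun a => (ψ' a : β) := hψ ▸ ⟨a, rfl⟩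
  obtain rfl : a' = a := Subtype.ext
    (hd.elim a'.2 a.2 (Set.not_disjoint_iff.2 ⟨ψ a, ha' ▸ (ψ' a').2, (ψ a).2⟩))
  exact Subtype.ext ha'.symm

theorem exists_pairwiseDisjoint_ncard_eq (hs : s.Finite) (x : α) {S : Set ℕ} {k : ℕ}
    (hS : S.Finite ∧ S.ncard = k) : ∃ D : α → Set ℕ, D x = S ∧
      (∀ a ∈ insert x s, (D a).Finite ∧ (D a).ncard = k) ∧ (insert x s).PairwiseDisjoint D := by
  classical
  obtain ⟨ι, hι⟩ := Set.countable_iff_exists_injOn.1 (hs.insert x).countable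
  obtain ⟨m, hm⟩ := hS.1.bddAbove
  -- the fresh lists are blocks `m + 1 + pair (ι a) j`, `j < k`, lying above `S`
  let e : α → ℕ → ℕ := fun a j => m + 1 + Nat.pair (ι a) j
  have he : ∀ a j a' j', e a j = e a' j' → ι a = ι a' ∧ j = j' := fun a j a' j' hj =>
    Nat.pair_eq_pair.1 (Nat.add_left_cancel hj)
  have hS_lt : ∀ a j, e a j ∉ S := fun a j hj => by
    have := hm hj
    dsimp only [e] at this
    omega
  refine ⟨fun a => if a = x then S else e a '' Set.Iio k, if_pos rfl, fun a _ => ?_,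
    fun a ha a' ha' hne => ?_⟩
  · by_cases hax : a = x
    · simpa only [if_pos hax] using hS
    simp only [if_neg hax]
    refine ⟨(Set.finite_Iio k).image _, ?_⟩
    rw [Set.ncard_image_of_injective _ fun j j' hj => (he a j a j' hj).2, ← Finset.coe_range,
      Set.ncard_coe_finset, Finset.card_range]
  · simp only [Function.onFun]
    by_cases hax : a = x
    · subst hax
      simp only [if_neg (Ne.symm hne)]
      exact Set.disjoint_left.2 fun n hn ⟨j, _, hj⟩ => hS_lt a' j (hj ▸ hn)
    by_cases hax' : a' = x
    · subst hax'
      simp only [if_neg hne]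
      exact Set.disjoint_left.2 fun n ⟨j, _, hj⟩ hn => hS_lt a j (hj ▸ hn)
    simp only [if_neg hax, if_neg hax']
    exact Set.disjoint_left.2 fun n ⟨j, _, hj⟩ ⟨j', _, hj'⟩ =>
      hne (hι ha ha' (he a j a' j' (hj.trans hj'.symm)).1)

end Tuples

section Stars

variable {G : SimpleGraph V} {W : Set V} {ρ : V → ℕ} {c l f p x y z : V}

theorem IsLeafAt.adj (h : IsLeafAt G l f) : G.Adj l f := by
  rw [← SimpleGraph.mem_neighborSet, h]; rfl

theorem IsLeafAt.eq_of_adj (h : IsLeafAt G l f) (hy : G.Adj l y) : y = f := by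
  rw [← Set.mem_singleton_iff, ← h]; exact hy

theorem IsLeafAt.unique {f' : V} (h : IsLeafAt G l f) (h' : IsLeafAt G l f') : f = f' :=
  Set.singleton_injective (h.symm.trans h')

theorem not_isLeafAt_of_adj_of_adj (hyz : y ≠ z) (hy : G.Adj x y) (hz : G.Adj x z) (f : V) :
    ¬IsLeafAt G x f := fun h => hyz ((h.eq_of_adj hy).trans (h.eq_of_adj hz).symm)

theorem indepSet_pair {a b : V} (hab : ¬G.Adj a b) : IndepSet G {a, b} := by
  rintro x (rfl | rfl) y (rfl | rfl) hxy
  exacts [G.irrefl hxy, hab hxy, hab hxy.symm, G.irrefl hxy]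

theorem isStarC_insert {S : Set V} (hS : S.Nonempty) (hadj : ∀ s ∈ S, G.Adj c s)
    (hind : IndepSet G S) : IsStarC G c (insert c S) := by
  have hcS : c ∉ S := fun hc => G.irrefl (hadj c hc)
  rw [IsStarC, Set.insert_sdiff_self_of_notMem hcS]
  exact ⟨Set.mem_insert c S, hS, hadj, hind⟩

theorem isStarC_pair (h : G.Adj c x) : IsStarC G c {c, x} :=
  isStarC_insert (Set.singleton_nonempty x) (by simpa using h) (by simp [IndepSet])

theorem mono_of_forall_eq {r : ℕ} (h : ∀ x ∈ W, ρ x = r) : Mono ρ W :=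
  fun x hx y hy => (h x hx).trans (h y hy).symm

theorem IsStarC.eq_or_eq_of_adj (hW : IsStarC G p W) (hx : x ∈ W) (hy : y ∈ W)
    (hxy : G.Adj x y) : x = p ∨ y = p := by
  by_contra! hne
  exact hW.2.2.2 x ⟨hx, hne.1⟩ y ⟨hy, hne.2⟩ hxy

theorem IsMaxStar.mem_of_adj (hW : IsMaxStar G W) (hp : IsStarC G p W) (hu : G.Adj p y)
    (hind : ∀ w ∈ W \ {p}, ¬G.Adj y w) : y ∈ W := by
  obtain ⟨hpW, hne, hadj, hindW⟩ := hp
  have hstar : IsStarC G p (insert y W) := by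
    refine ⟨Set.mem_insert_of_mem _ hpW, hne.mono (Set.sdiff_subset_sdiff_left
      (Set.subset_insert _ _)), ?_, ?_⟩
    · rintro u ⟨rfl | hu', hup⟩
      exacts [hu, hadj u ⟨hu', hup⟩]
    · rintro x ⟨rfl | hx, hxp⟩ z ⟨rfl | hz, hzp⟩ hxz
      exacts [G.irrefl hxz, hind z ⟨hz, hzp⟩ hxz, hind x ⟨hx, hxp⟩ hxz.symm,
        hindW x ⟨hx, hxp⟩ z ⟨hz, hzp⟩ hxz]
  rw [← hW.2 _ ⟨p, hstar⟩ (Set.subset_insert _ _)]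
  exact Set.mem_insert y W

def NoMonoStarAt (G : SimpleGraph V) (ρ : V → ℕ) (f : V) : Prop :=
  ∀ W, IsMaxStar G W → IsStarC G f W → ¬Mono ρ W

theorem IsLeafAt.noMonoStarAt (hl : IsLeafAt G l f) (hρ : ρ l ≠ ρ f) : NoMonoStarAt G ρ f :=
  fun _ hW hf hmono => hρ <| hmono l (hW.mem_of_adj hf hl.adj.symm
    fun _ hw hlw => hw.2 (hl.eq_of_adj hlw)) f hf.1

theorem exists_isLColoring_leaf_ne {L : V → Set ℕ} (hL : ∀ x, 1 < (L x).ncard)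
    (hρ : IsLColoring L ρ) :
    ∃ ρ', IsLColoring L ρ' ∧ (∀ x, (∀ f, ¬IsLeafAt G x f) → ρ' x = ρ x) ∧
      ∀ l f, IsLeafAt G l f → (∀ g, ¬IsLeafAt G f g) → ρ' l ≠ ρ' f := by
  classical
  choose other hother hne using fun x => Set.exists_ne_of_one_lt_ncard (hL x)
  let ρ' x := if h : ∃ f, IsLeafAt G x f then other x (ρ h.choose) else ρ x
  refine ⟨ρ', fun x => ?_, fun x hx => dif_neg (not_exists.2 hx), fun l f hl hf => ?_⟩
  · by_cases h : ∃ f, IsLeafAt G x f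
    · simp only [ρ', dif_pos h]; exact hother _ _
    · simp only [ρ', dif_neg h]; exact hρ x
  · have h : ∃ f, IsLeafAt G l f := ⟨f, hl⟩
    have hf' : ρ' f = ρ f := dif_neg (not_exists.2 hf)
    simp only [ρ', dif_pos h, h.choose_spec.unique hl] at hf' ⊢
    rw [hf']
    exact hne _ _

end Stars

theorem IsListAssignment.nonempty {L : V → Set ℕ} {k : ℕ} (hL : IsListAssignment L k)
    (hk : 1 ≤ k) (x : V) : (L x).Nonempty :=
  Set.nonempty_of_ncard_ne_zero (by rw [(hL x).2]; omega)

theorem exists_isLColoring_image_eq {s : Set V} {L : V → Set ℕ} (hL : ∀ x, (L x).Nonempty)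
    (ψ : s → ℕ) (hψ : ∀ a : ↥s, ψ a ∈ L a) :
    ∃ φ, IsLColoring L φ ∧ φ '' s = Set.range ψ ∧ ∀ a : ↥s, φ a = ψ a := by
  classical
  refine ⟨fun x => if hx : x ∈ s then ψ ⟨x, hx⟩ else (hL x).some, fun x => ?_, ?_,
    fun a => dif_pos a.2⟩
  · by_cases hx : x ∈ s
    · simpa [hx] using hψ ⟨x, hx⟩
    · simpa [hx] using (hL x).some_mem
  · rw [Set.image_eq_range]
    exact congrArg Set.range (funext fun a => dif_pos a.2)

theorem IsInducedCycle.exists_opposite_of_four {G : SimpleGraph V} {T : Set V} {x : V}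
    (hT : IsInducedCycle G 4 T) (hx : x ∈ T) :
    ∃ y₁ y₂ z, G.Adj x y₁ ∧ G.Adj x y₂ ∧ G.Adj y₁ z ∧ G.Adj y₂ z ∧ ¬G.Adj x z ∧
      ¬G.Adj y₁ y₂ ∧ x ≠ z ∧ y₁ ≠ y₂ := by
  obtain ⟨f, hf, rfl, hadj⟩ := hT
  obtain ⟨i, rfl⟩ := hx
  refine ⟨f (i + 1), f (i + 3), f (i + 2), ?_⟩
  simp only [hadj, hf.ne_iff]
  revert i
  decide

namespace IsSwitcher

variable {G : SimpleGraph V} {k : ℕ} {a b c c' x z : V} {C T : Set V} {ρ : V → ℕ}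

theorem mem_of_adj (h : IsSwitcher G k {a, b} C) (hc : c ∈ C) (hcz : G.Adj c z) :
    z ∈ C ∪ {a, b} :=
  h.2.2.2.2 c hc z hcz

theorem adj_of_mem_of_mem {U : Set V} {u : V} (h : IsSwitcher G k U C) (hc : c ∈ C)
    (hu : u ∈ U) : G.Adj c u :=
  h.2.2.2.1 u hu (Set.mem_insert_of_mem u hc) (Set.mem_insert u C)
    fun hcu => Set.disjoint_left.1 h.1 hc (hcu ▸ hu)

theorem adj_left (h : IsSwitcher G k {a, b} C) (hc : c ∈ C) : G.Adj c a :=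
  h.adj_of_mem_of_mem hc (Set.mem_insert a _)

theorem adj_right (h : IsSwitcher G k {a, b} C) (hc : c ∈ C) : G.Adj c b :=
  h.adj_of_mem_of_mem hc (Set.mem_insert_of_mem a rfl)

theorem adj_of_mem_union (h : IsSwitcher G k {a, b} C) (hc : c ∈ C) (hz : z ∈ C ∪ {a, b})
    (hcz : c ≠ z) : G.Adj c z := by
  rcases hz with hz | hz
  · exact h.2.2.2.1 a (Set.mem_insert a _) (Set.mem_insert_of_mem a hc)
      (Set.mem_insert_of_mem a hz) hcz
  · exact h.adj_of_mem_of_mem hc hz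

theorem mem_pair_of_adj (h : IsSwitcher G k {a, b} C) (hc : c ∈ C) (hcz : G.Adj c z)
    (hx : x ∈ ({a, b} : Set V)) (hxz : ¬G.Adj x z) : z ∈ ({a, b} : Set V) :=
  (h.mem_of_adj hc hcz).resolve_left fun hz => hxz (h.adj_of_mem_of_mem hz hx).symm

theorem subset_insert_of_isClique (h : IsSwitcher G k {a, b} C) (hne : a ≠ b)
    (hab : ¬G.Adj a b) (hT : G.IsClique T) (hcT : c ∈ T) (hc : c ∈ C) :
    T ⊆ insert a C ∨ T ⊆ insert b C := by
  have hsub : ∀ z ∈ T, z ∈ C ∨ z = a ∨ z = b := fun z hz => by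
    rcases eq_or_ne c z with rfl | hcz
    · exact Or.inl hc
    · exact h.mem_of_adj hc (hT hcT hz hcz)
  by_cases haT : a ∈ T
  · refine Or.inl fun z hz => ?_
    rcases hsub z hz with hz' | rfl | rfl
    exacts [Set.mem_insert_of_mem _ hz', Set.mem_insert _ _, absurd (hT haT hz hne) hab]
  · refine Or.inr fun z hz => ?_
    rcases hsub z hz with hz' | rfl | rfl
    exacts [Set.mem_insert_of_mem _ hz', absurd hz haT, Set.mem_insert _ _]

theorem ncard_le_of_isClique (h : IsSwitcher G k {a, b} C) (hne : a ≠ b) (hab : ¬G.Adj a b)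
    (hT : G.IsClique T) (hcT : c ∈ T) (hc : c ∈ C) : T.ncard ≤ k + 1 := by
  have hle : ∀ u, T ⊆ insert u C → T.ncard ≤ k + 1 := fun u hu =>
    (Set.ncard_le_ncard hu (h.2.1.insert u)).trans (h.2.2.1 ▸ Set.ncard_insert_le u C)
  rcases h.subset_insert_of_isClique hne hab hT hcT hc with hT' | hT'
  exacts [hle a hT', hle b hT']

theorem isStarC_triple (h : IsSwitcher G k {a, b} C) (hab : ¬G.Adj a b) (hc : c ∈ C) :
    IsStarC G c {c, a, b} :=
  isStarC_insert (Set.insert_nonempty a _)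
    (by rintro s (rfl | rfl); exacts [h.adj_left hc, h.adj_right hc]) (indepSet_pair hab)

theorem subset_pair_of_isStarC {p q : V} {W : Set V} (h : IsSwitcher G k {a, b} C)
    (hp : p ∈ C) (hq : q ∈ C) (hW : IsStarC G p W) (hqW : q ∈ W) (hqp : q ≠ p) :
    W ⊆ {p, q} := by
  intro z hz
  by_contra hz'
  simp only [Set.mem_insert_iff, Set.mem_singleton_iff, not_or] at hz'
  exact hW.2.2.2 q ⟨hqW, hqp⟩ z ⟨hz, hz'.1⟩
    (h.adj_of_mem_union hq (h.mem_of_adj hp (hW.2.2.1 z ⟨hz, hz'.1⟩)) (Ne.symm hz'.2))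

theorem isMaxStar_pair (h : IsSwitcher G k {a, b} C) (hc : c ∈ C) (hc' : c' ∈ C)
    (hne : c ≠ c') : IsMaxStar G {c, c'} := by
  have hadj := h.adj_of_mem_union hc (Or.inl hc') hne
  refine ⟨⟨c, isStarC_pair hadj⟩, fun W ⟨p, hW⟩ hsub => Set.Subset.antisymm ?_ hsub⟩
  have hcW : c ∈ W := hsub (Set.mem_insert c _)
  have hc'W : c' ∈ W := hsub (Set.mem_insert_of_mem c rfl)
  rcases hW.eq_or_eq_of_adj hcW hc'W hadj with rfl | rfl
  · exact h.subset_pair_of_isStarC hc hc' hW hc'W hne.symm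
  · rw [Set.pair_comm]; exact h.subset_pair_of_isStarC hc' hc hW hcW hne

theorem isMaxStar_triple (h : IsSwitcher G k {a, b} C) (hne : a ≠ b) (hab : ¬G.Adj a b)
    (hc : c ∈ C) : IsMaxStar G {c, a, b} := by
  refine ⟨⟨c, h.isStarC_triple hab hc⟩, fun W ⟨p, hW⟩ hsub => Set.Subset.antisymm ?_ hsub⟩
  have hcW : c ∈ W := hsub (by simp)
  have haW : a ∈ W := hsub (by simp)
  have hbW : b ∈ W := hsub (by simp)
  have hpc : p = c := by
    rcases hW.eq_or_eq_of_adj hcW haW (h.adj_left hc) with hca | rfl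
    · exact hca.symm
    rcases hW.eq_or_eq_of_adj hcW hbW (h.adj_right hc) with hcb | rfl
    exacts [hcb.symm, absurd rfl hne]
  subst hpc
  intro z hz
  by_contra hz'
  simp only [Set.mem_insert_iff, Set.mem_singleton_iff, not_or] at hz'
  rcases h.mem_of_adj hc (hW.2.2.1 z ⟨hz, hz'.1⟩) with hzC | hzab
  · exact hW.2.2.2 z ⟨hz, hz'.1⟩ a ⟨haW, (h.adj_left hc).ne.symm⟩ (h.adj_left hzC)
  · rcases hzab with rfl | rfl
    exacts [hz'.2.1 rfl, hz'.2.2 rfl]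

/-- The maximal stars centred in a switcher are the edges inside it and the triples
`{c, a, b}`. -/
theorem forall_noMonoStarAt_iff (h : IsSwitcher G k {a, b} C) (hne : a ≠ b)
    (hab : ¬G.Adj a b) :
    (∀ c ∈ C, NoMonoStarAt G ρ c) ↔ Set.InjOn ρ C ∧ (ρ a = ρ b → ρ a ∉ ρ '' C) := by
  constructor
  · intro hC
    refine ⟨fun c hc c' hc' hρ => by_contra fun hcc' => ?_, ?_⟩
    · exact hC c hc _ (h.isMaxStar_pair hc hc' hcc')
        (isStarC_pair (h.adj_of_mem_union hc (Or.inl hc') hcc'))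
        (mono_of_forall_eq (r := ρ c) (by simp [hρ]))
    · rintro hρab ⟨c, hc, hρc⟩
      exact hC c hc _ (h.isMaxStar_triple hne hab hc) (h.isStarC_triple hab hc)
        (mono_of_forall_eq (r := ρ a) (by simp [hρc, hρab]))
  · rintro ⟨hinj, hρ⟩ c hc W hW hcW hmono
    by_cases hC : ∃ c' ∈ W, c' ∈ C ∧ c' ≠ c
    · obtain ⟨c', hc'W, hc', hne'⟩ := hC
      exact hne' (hinj hc' hc (hmono c' hc'W c hcW.1))
    push Not at hC
    have hWsub : W ⊆ {c, a, b} := fun z hz => by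
      by_cases hzc : z = c
      · exact Or.inl hzc
      rcases h.mem_of_adj hc (hcW.2.2.1 z ⟨hz, hzc⟩) with hzC | hzab
      exacts [absurd (hC z hz hzC) hzc, Set.mem_insert_of_mem _ hzab]
    rw [← hW.2 _ ⟨c, h.isStarC_triple hab hc⟩ hWsub] at hmono
    exact hρ (hmono a (by simp) b (by simp)) ⟨c, hc, hmono c (by simp) a (by simp)⟩

theorem not_isLeafAt {U : Set V} {u : V} (h : IsSwitcher G k U C) (hk : 2 ≤ k) (hu : u ∈ U)
    (f : V) : ¬IsLeafAt G u f := by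
  obtain ⟨c, hc, c', hc', hne⟩ := (Set.one_lt_ncard h.2.1).1 (by rw [h.2.2.1]; omega)
  exact not_isLeafAt_of_adj_of_adj hne (h.adj_of_mem_of_mem hc hu).symm
    (h.adj_of_mem_of_mem hc' hu).symm f

end IsSwitcher

structure IsForcerOn (G : SimpleGraph V) (k : ℕ) (v : V) (F A B : Set V)
    (C : V → V → Set V) : Prop where
  finite_left : A.Finite
  ncard_left : A.ncard = k - 1
  finite_right : B.Finite
  ncard_right : B.ncard = k ^ k - 1
  isLeafed_left : ∀ a ∈ A, IsLeafed G a
  isLeafed_right : ∀ b ∈ B, IsLeafed G b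
  notMem_left : v ∉ A
  notMem_right : v ∉ B
  disjoint : Disjoint A B
  switcher : ∀ a ∈ insert v A, ∀ b ∈ B, ¬G.Adj a b ∧ IsSwitcher G k {a, b} (C a b)
  disjoint_switcher : ∀ a ∈ insert v A, ∀ b ∈ B, ∀ a' ∈ insert v A, ∀ b' ∈ B,
    (a ≠ a' ∨ b ≠ b') → Disjoint (C a b) (C a' b')
  disjoint_switcher_insert : ∀ a ∈ insert v A, ∀ b ∈ B, Disjoint (C a b) (insert v (A ∪ B))
  eq_union : F = A ∪ B ∪ ⋃ a ∈ insert v A, ⋃ b ∈ B, C a b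
  adj : ∀ x ∈ A ∪ B, ∀ y, G.Adj x y →
    (∃ a ∈ insert v A, ∃ b ∈ B, (x = a ∨ x = b) ∧ y ∈ C a b) ∨ IsLeafAt G y x

theorem IsForcer.exists_isForcerOn {G : SimpleGraph V} {k : ℕ} {v : V} {F : Set V}
    (hF : IsForcer G k v F) : ∃ A B C, IsForcerOn G k v F A B C := by
  obtain ⟨A, B, C, h₁, h₂, h₃, h₄, h₅, h₆, h₇, h₈, h₉, h₁₀, h₁₁, h₁₂, h₁₃, h₁₄⟩ := hF
  exact ⟨A, B, C, h₁, h₂, h₃, h₄, h₅, h₆, h₇, h₈, h₉, h₁₀, h₁₁, h₁₂, h₁₃, h₁₄⟩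

namespace IsForcerOn

variable {G : SimpleGraph V} {k : ℕ} {v : V} {F A B : Set V} {C : V → V → Set V}
  {a b c x y z : V} {L : V → Set ℕ} {ρ φ : V → ℕ}

theorem ne_of_mem (h : IsForcerOn G k v F A B C) (ha : a ∈ insert v A) (hb : b ∈ B) : a ≠ b :=
  fun hab => Set.disjoint_left.1 (Set.disjoint_insert_left.2 ⟨h.notMem_right, h.disjoint⟩) ha
    (hab ▸ hb)

theorem isSwitcher (h : IsForcerOn G k v F A B C) (ha : a ∈ insert v A) (hb : b ∈ B) :
    IsSwitcher G k {a, b} (C a b) :=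
  (h.switcher a ha b hb).2

theorem not_adj (h : IsForcerOn G k v F A B C) (ha : a ∈ insert v A) (hb : b ∈ B) :
    ¬G.Adj a b :=
  (h.switcher a ha b hb).1

theorem notMem_insert_of_mem (h : IsForcerOn G k v F A B C) (ha : a ∈ insert v A) (hb : b ∈ B)
    (hc : c ∈ C a b) : c ∉ insert v A := fun hc' =>
  Set.disjoint_left.1 (h.disjoint_switcher_insert a ha b hb) hc
    (Set.insert_subset_insert Set.subset_union_left hc')

theorem notMem_right_of_mem (h : IsForcerOn G k v F A B C) (ha : a ∈ insert v A) (hb : b ∈ B)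
    (hc : c ∈ C a b) : c ∉ B := fun hc' =>
  Set.disjoint_left.1 (h.disjoint_switcher_insert a ha b hb) hc
    (Set.mem_insert_of_mem v (Set.mem_union_right A hc'))

theorem mem_iff (h : IsForcerOn G k v F A B C) :
    x ∈ F ↔ x ∈ A ∪ B ∨ ∃ a ∈ insert v A, ∃ b ∈ B, x ∈ C a b := by
  rw [h.eq_union]
  simp only [Set.mem_union, Set.mem_iUnion, exists_prop]

theorem mem_of_mem_switcher (h : IsForcerOn G k v F A B C) (ha : a ∈ insert v A) (hb : b ∈ B)
    (hc : c ∈ C a b) : c ∈ F :=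
  h.mem_iff.2 (Or.inr ⟨a, ha, b, hb, hc⟩)

theorem notMem (h : IsForcerOn G k v F A B C) : v ∉ F := by
  rw [h.mem_iff]
  rintro (hv | ⟨a, ha, b, hb, hv⟩)
  · exact hv.elim h.notMem_left h.notMem_right
  · exact h.notMem_insert_of_mem ha hb hv (Set.mem_insert v A)

theorem pairwiseDisjoint (h : IsForcerOn G k v F A B C) :
    (insert v A ×ˢ B).PairwiseDisjoint fun p => C p.1 p.2 := by
  rintro ⟨a, b⟩ ⟨ha, hb⟩ ⟨a', b'⟩ ⟨ha', hb'⟩ hne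
  exact h.disjoint_switcher a ha b hb a' ha' b' hb' (by simpa [← not_and_or] using hne)

theorem ncard_insert (h : IsForcerOn G k v F A B C) (hk : 1 ≤ k) : (insert v A).ncard = k := by
  rw [Set.ncard_insert_of_notMem h.notMem_left h.finite_left, h.ncard_left]
  omega

theorem nonempty_right (h : IsForcerOn G k v F A B C) (hk : 2 ≤ k) : B.Nonempty := by
  refine Set.nonempty_of_ncard_ne_zero ?_
  have := Nat.one_lt_pow (by omega : k ≠ 0) (by omega : 1 < k)
  rw [h.ncard_right]
  omega

theorem not_isLeafAt_of_mem_insert (h : IsForcerOn G k v F A B C) (hk : 2 ≤ k)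
    (ha : a ∈ insert v A) (f : V) : ¬IsLeafAt G a f :=
  let ⟨_, hb⟩ := h.nonempty_right hk
  (h.isSwitcher ha hb).not_isLeafAt hk (Set.mem_insert a _) f

theorem not_isLeafAt_of_mem_right (h : IsForcerOn G k v F A B C) (hk : 2 ≤ k) (hb : b ∈ B)
    (f : V) : ¬IsLeafAt G b f :=
  (h.isSwitcher (Set.mem_insert v A) hb).not_isLeafAt hk (Set.mem_insert_of_mem v rfl) f

theorem not_isLeafAt_of_mem_union (h : IsForcerOn G k v F A B C) (hk : 2 ≤ k) (hx : x ∈ A ∪ B)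
    (f : V) : ¬IsLeafAt G x f :=
  hx.elim (fun hx => h.not_isLeafAt_of_mem_insert hk (Set.mem_insert_of_mem v hx) f)
    (fun hx => h.not_isLeafAt_of_mem_right hk hx f)

theorem not_isLeafAt_of_mem_switcher (h : IsForcerOn G k v F A B C) (ha : a ∈ insert v A)
    (hb : b ∈ B) (hc : c ∈ C a b) (f : V) : ¬IsLeafAt G c f :=
  not_isLeafAt_of_adj_of_adj (h.ne_of_mem ha hb) ((h.isSwitcher ha hb).adj_left hc)
    ((h.isSwitcher ha hb).adj_right hc) f

theorem exists_mem_switcher_of_adj (h : IsForcerOn G k v F A B C) (hx : x ∈ A ∪ B)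
    (hxy : G.Adj x y) (hyz : G.Adj y z) (hzx : z ≠ x) :
    ∃ a ∈ insert v A, ∃ b ∈ B, y ∈ C a b ∧ x ∈ ({a, b} : Set V) := by
  rcases h.adj x hx y hxy with ⟨a, ha, b, hb, hxab, hy⟩ | hleaf
  · exact ⟨a, ha, b, hb, hy, hxab⟩
  · exact absurd (hleaf.eq_of_adj hyz) hzx

theorem disjoint_of_isInducedComplete (h : IsForcerOn G k v F A B C) (hk : 1 ≤ k)
    {T : Set V} (hT : IsInducedComplete G (k + 2) T) : Disjoint T F := by
  obtain ⟨hTc, hTf, hTn⟩ := hT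
  refine Set.disjoint_right.2 fun x hxF hxT => ?_
  suffices ∃ a ∈ insert v A, ∃ b ∈ B, ∃ c ∈ T, c ∈ C a b by
    obtain ⟨a, ha, b, hb, c, hcT, hc⟩ := this
    have := (h.isSwitcher ha hb).ncard_le_of_isClique (h.ne_of_mem ha hb) (h.not_adj ha hb)
      hTc hcT hc
    omega
  rcases h.mem_iff.1 hxF with hx | ⟨a, ha, b, hb, hx⟩
  · obtain ⟨y, hy, w, hw, hyw⟩ : ∃ y ∈ T \ {x}, ∃ w ∈ T \ {x}, y ≠ w :=
      (Set.one_lt_ncard hTf.sdiff).1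
      (by rw [Set.ncard_sdiff_singleton_of_mem hxT, hTn]; omega)
    obtain ⟨a, ha, b, hb, hyC, -⟩ := h.exists_mem_switcher_of_adj hx
      (hTc hxT hy.1 (Ne.symm hy.2)) (hTc hy.1 hw.1 hyw) hw.2
    exact ⟨a, ha, b, hb, y, hy.1, hyC⟩
  · exact ⟨a, ha, b, hb, x, hxT, hx⟩

theorem disjoint_of_isInducedCycle (h : IsForcerOn G k v F A B C) {T : Set V}
    (hT : IsInducedCycle G 4 T) : Disjoint T F := by
  refine Set.disjoint_right.2 fun x hxF hxT => ?_
  obtain ⟨y₁, y₂, z, hxy₁, hxy₂, hy₁z, hy₂z, hxz, hy₁₂, hxz', hy₁₂'⟩ :=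
    hT.exists_opposite_of_four hxT
  rcases h.mem_iff.1 hxF with hx | ⟨a, ha, b, hb, hx⟩
  · -- `y₁` and `y₂` lie in switchers at `x` whose other end is `z`, so in the same switcher
    obtain ⟨a₁, ha₁, b₁, hb₁, hy₁, hx₁⟩ :=
      h.exists_mem_switcher_of_adj hx hxy₁ hy₁z (Ne.symm hxz')
    obtain ⟨a₂, ha₂, b₂, hb₂, hy₂, hx₂⟩ :=
      h.exists_mem_switcher_of_adj hx hxy₂ hy₂z (Ne.symm hxz')
    have hz₁ := (h.isSwitcher ha₁ hb₁).mem_pair_of_adj hy₁ hy₁z hx₁ hxz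
    have hz₂ := (h.isSwitcher ha₂ hb₂).mem_pair_of_adj hy₂ hy₂z hx₂ hxz
    have h₁₂ := h.ne_of_mem ha₁ hb₂
    have h₂₁ := h.ne_of_mem ha₂ hb₁
    simp only [Set.mem_insert_iff, Set.mem_singleton_iff] at hx₁ hx₂ hz₁ hz₂
    obtain ⟨rfl, rfl⟩ : a₁ = a₂ ∧ b₁ = b₂ := by grind
    exact hy₁₂ ((h.isSwitcher ha₁ hb₁).adj_of_mem_union hy₁ (Or.inl hy₂) hy₁₂')
  · -- `y₁, y₂` are the ends `a, b`, and the common neighbour `z` of `a` and `b` outside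
    -- `C a b` would have to lie in another switcher at `b`, which does not reach `a`
    have hS := h.isSwitcher ha hb
    have hend : ∀ {y y'}, G.Adj x y → G.Adj x y' → ¬G.Adj y y' → y ≠ y' →
        y ∈ ({a, b} : Set V) := fun hy hy' hyy' hne => (hS.mem_of_adj hx hy).resolve_left
      fun hyC => hyy' (hS.adj_of_mem_union hyC (hS.mem_of_adj hx hy') hne)
    have h₁ := hend hxy₁ hxy₂ hy₁₂ hy₁₂'
    have h₂ := hend hxy₂ hxy₁ (fun h' => hy₁₂ h'.symm) (Ne.symm hy₁₂')
    have hzab : G.Adj z a ∧ G.Adj z b := by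
      rcases h₁ with rfl | rfl <;> rcases h₂ with rfl | rfl
      exacts [absurd rfl hy₁₂', ⟨hy₁z.symm, hy₂z.symm⟩, ⟨hy₂z.symm, hy₁z.symm⟩, absurd rfl hy₁₂']
    obtain ⟨a', ha', b', hb', hzC, hbab⟩ := h.exists_mem_switcher_of_adj (Or.inr hb)
      hzab.2.symm hzab.1 (h.ne_of_mem ha hb)
    obtain rfl : b = b' := hbab.resolve_left fun hba => h.ne_of_mem ha' hb hba.symm
    obtain rfl : a = a' := ((h.isSwitcher ha' hb).mem_pair_of_adj hzC hzab.1
      (Or.inr rfl) fun hba => h.not_adj ha hb hba.symm).resolve_right (h.ne_of_mem ha hb)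
    exact hxz (hS.adj_of_mem_union hx (Or.inl hzC) hxz')

theorem lAdmissible_of_injOn (h : IsForcerOn G k v F A B C) (hk : 2 ≤ k)
    (hL : IsListAssignment L k) (hρ : IsLColoring L ρ)
    (hsw : ∀ a ∈ insert v A, ∀ b ∈ B, Set.InjOn ρ (C a b) ∧ ρ a ≠ ρ b) :
    LAdmissible G F L v (ρ v) := by
  obtain ⟨ρ', hρ', hρ'eq, hleaf⟩ :=
    exists_isLColoring_leaf_ne (G := G) (fun x => by rw [(hL x).2]; omega) hρ
  have hA : ∀ a ∈ insert v A, ρ' a = ρ a := fun a ha =>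
    hρ'eq a (h.not_isLeafAt_of_mem_insert hk ha)
  have hB : ∀ b ∈ B, ρ' b = ρ b := fun b hb => hρ'eq b (h.not_isLeafAt_of_mem_right hk hb)
  refine ⟨hρ v, ρ', hρ', hA v (Set.mem_insert v A), fun f hf => ?_⟩
  rcases h.mem_iff.1 hf with hf | ⟨a, ha, b, hb, hfC⟩
  · obtain ⟨l, hl⟩ := hf.elim (h.isLeafed_left f) (h.isLeafed_right f)
    exact hl.noMonoStarAt (hleaf l f hl (h.not_isLeafAt_of_mem_union hk hf))
  · refine ((h.isSwitcher ha hb).forall_noMonoStarAt_iff (h.ne_of_mem ha hb)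
      (h.not_adj ha hb)).2 ⟨(hsw a ha b hb).1.congr fun c hc => ?_,
      fun hab => absurd ?_ (hsw a ha b hb).2⟩ f hfC
    · exact (hρ'eq c (h.not_isLeafAt_of_mem_switcher ha hb hc)).symm
    · rwa [hA a ha, hB b hb] at hab

/-- Colour each `b` outside `φ '' insert v A` and each switcher by distinct representatives. -/
theorem lAdmissible_of_not_subset (h : IsForcerOn G k v F A B C) (hk : 2 ≤ k)
    (hL : IsListAssignment L k) (hφ : IsLColoring L φ)
    (hB : ∀ b ∈ B, ¬L b ⊆ φ '' insert v A) : LAdmissible G F L v (φ v) := by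
  classical
  choose! γ hγL hγ using fun b hb => Set.not_subset.1 (hB b hb)
  choose! σ hσ hσL using fun (p : V × V) (hp : p ∈ insert v A ×ˢ B) =>
    exists_injOn_forall_mem (h.isSwitcher hp.1 hp.2).2.1
      fun c _ => ⟨(hL c).1, by rw [(hL c).2, (h.isSwitcher hp.1 hp.2).2.2.1]⟩
  obtain ⟨σ', hσ'C, hσ'⟩ := h.pairwiseDisjoint.exists_eqOn σ φ
  have hout : ∀ a ∈ insert v A, B.piecewise γ σ' a = φ a := fun a ha => by
    rw [Set.piecewise_eq_of_notMem _ _ _ fun hb => h.ne_of_mem ha hb rfl]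
    exact hσ' a fun p hp hap => h.notMem_insert_of_mem hp.1 hp.2 hap ha
  have hC : ∀ a ∈ insert v A, ∀ b ∈ B, Set.EqOn (B.piecewise γ σ') (σ (a, b)) (C a b) :=
    fun a ha b hb c hc => by
      rw [Set.piecewise_eq_of_notMem _ _ _ (h.notMem_right_of_mem ha hb hc)]
      exact hσ'C (a, b) ⟨ha, hb⟩ hc
  rw [← hout v (Set.mem_insert v A)]
  refine h.lAdmissible_of_injOn hk hL (fun x => ?_) fun a ha b hb =>
    ⟨(hσ (a, b) ⟨ha, hb⟩).congr (hC a ha b hb).symm, ?_⟩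
  · by_cases hxB : x ∈ B
    · rw [Set.piecewise_eq_of_mem _ _ _ hxB]
      exact hγL x hxB
    by_cases hx : ∃ a ∈ insert v A, ∃ b ∈ B, x ∈ C a b
    · obtain ⟨a, ha, b, hb, hxC⟩ := hx
      rw [hC a ha b hb hxC]
      exact hσL (a, b) ⟨ha, hb⟩ x hxC
    · rw [Set.piecewise_eq_of_notMem _ _ _ hxB,
        hσ' x fun p hp hxp => hx ⟨p.1, hp.1, p.2, hp.2, hxp⟩]
      exact hφ x
  · rw [hout a ha, Set.piecewise_eq_of_mem _ _ _ hb]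
    exact fun hab => hγ b hb ⟨a, ha, hab⟩

theorem exists_not_subset_of_not_pairwiseDisjoint (h : IsForcerOn G k v F A B C) (hk : 1 ≤ k)
    (hL : IsListAssignment L k) (hd : ¬(insert v A).PairwiseDisjoint L) :
    ∃ φ, IsLColoring L φ ∧ ∀ b ∈ B, ¬L b ⊆ φ '' insert v A := by
  classical
  simp only [Set.PairwiseDisjoint, Set.Pairwise, Function.onFun, not_forall] at hd
  obtain ⟨a, ha, a', ha', hne, hmeet⟩ := hd
  obtain ⟨γ, hγ, hγ'⟩ := Set.not_disjoint_iff.1 hmeet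
  let φ x := if x = a ∨ x = a' then γ else (hL.nonempty hk x).some
  have hφ : IsLColoring L φ := fun x => by
    by_cases hx : x = a ∨ x = a'
    · rcases hx with rfl | rfl <;> simpa [φ]
    · simpa [φ, hx] using (hL.nonempty hk x).some_mem
  -- `φ` takes the same value at `a` and `a'`, so its image has fewer than `k` colours
  have hninj : ¬Set.InjOn φ (insert v A) := fun hinj => hne (hinj ha ha' (by simp [φ]))
  have hA := h.finite_left.insert v
  have hlt : (φ '' insert v A).ncard < k := by
    refine lt_of_le_of_ne ((Set.ncard_image_le hA).trans (h.ncard_insert hk).le) fun heq => ?_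
    exact hninj (Set.injOn_of_ncard_image_eq (heq.trans (h.ncard_insert hk).symm) hA)
  refine ⟨φ, hφ, fun b _ hsub => ?_⟩
  have := Set.ncard_le_ncard hsub (hA.image φ)
  rw [(hL b).2] at this
  omega

/-- With pairwise disjoint lists on `insert v A`, each `b ∈ B` exhausts the image of at most one
of the `k ^ k` choices of colours on `insert v A`, and `B` has only `k ^ k - 1` elements. -/
theorem exists_not_subset_of_pairwiseDisjoint (h : IsForcerOn G k v F A B C) (hk : 1 ≤ k)
    (hL : IsListAssignment L k) (hd : (insert v A).PairwiseDisjoint L) :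
    ∃ φ, IsLColoring L φ ∧ ∀ b ∈ B, ¬L b ⊆ φ '' insert v A := by
  have hA := h.finite_left.insert v
  have := hA.to_subtype
  by_contra! hblock
  have hβ : ∀ ψ : (a : ↥(insert v A)) → L a, ∃ b ∈ B, L b = Set.range fun a => (ψ a : ℕ) := by
    intro ψ
    obtain ⟨φ, hφ, hφA, -⟩ :=
      exists_isLColoring_image_eq (hL.nonempty hk) (fun a => (ψ a : ℕ)) fun a => (ψ a).2
    obtain ⟨b, hb, hsub⟩ := hblock φ hφ
    rw [hφA] at hsub
    refine ⟨b, hb, Set.eq_of_subset_of_ncard_le hsub ?_ (Set.finite_range _)⟩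
    rw [Set.ncard_range_of_injective (hd.injective_val_tuple ψ), Nat.card_coe_set_eq,
      h.ncard_insert hk, (hL b).2]
  choose β hβB hβ using hβ
  have := h.finite_right.to_subtype
  have hle := Nat.card_le_card_of_injective (fun ψ => (⟨β ψ, hβB ψ⟩ : B))
    fun ψ ψ' hψ => hd.injective_range_tuple <| (hβ ψ).symm.trans <| by
      rw [show β ψ = β ψ' from congrArg Subtype.val hψ]
      exact hβ ψ'
  rw [Nat.card_pi_eq_pow_ncard hA fun a _ => (hL a).2, h.ncard_insert hk, Nat.card_coe_set_eq,
    h.ncard_right] at hle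
  have : 0 < k ^ k := Nat.pow_pos (by omega)
  omega

theorem exists_lAdmissible (h : IsForcerOn G k v F A B C) (hk : 2 ≤ k)
    (hL : IsListAssignment L k) : ∃ c, LAdmissible G F L v c := by
  obtain ⟨φ, hφ, hB⟩ := (em ((insert v A).PairwiseDisjoint L)).elim
    (h.exists_not_subset_of_pairwiseDisjoint (by omega) hL)
    (h.exists_not_subset_of_not_pairwiseDisjoint (by omega) hL)
  exact ⟨φ v, h.lAdmissible_of_not_subset hk hL hφ hB⟩

theorem existsUnique_lAdmissible (h : IsForcerOn G k v F A B C) (hk : 2 ≤ k)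
    (hL : IsListAssignment L k) (hφ : IsLColoring L φ) (hB : ∀ b ∈ B, ¬L b ⊆ φ '' insert v A)
    (hblock : ∀ ρ, IsLColoring L ρ → ρ v ≠ φ v → ∃ b ∈ B, L b ⊆ ρ '' insert v A)
    (hC : ∀ a ∈ insert v A, ∀ b ∈ B, ∀ c ∈ C a b, L c = L b) :
    ∃! c, LAdmissible G F L v c := by
  refine ⟨φ v, h.lAdmissible_of_not_subset hk hL hφ hB, fun c ⟨_, ρ, hρ, hρv, hF⟩ => ?_⟩
  by_contra hne
  obtain ⟨b, hb, hsub⟩ := hblock ρ hρ (hρv ▸ hne)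
  obtain ⟨a, ha, hab⟩ := hsub (hρ b)
  have hS := h.isSwitcher ha hb
  obtain ⟨hinj, hρab⟩ := (hS.forall_noMonoStarAt_iff (h.ne_of_mem ha hb) (h.not_adj ha hb)).1
    fun c hc => hF c (h.mem_of_mem_switcher ha hb hc)
  -- `ρ` maps `C a b` injectively into the `k`-set `L b`, hence onto it
  have himg : ρ '' C a b = L b := Set.eq_of_subset_of_ncard_le
    (Set.image_subset_iff.2 fun c hc => hC a ha b hb c hc ▸ hρ c)
    (by rw [(hL b).2, hinj.ncard_image, hS.2.2.1]) (hL b).1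
  exact hρab hab (himg ▸ hab ▸ hρ b)

theorem exists_listAssignment_extend (h : IsForcerOn G k v F A B C) {LA R L₀ : V → Set ℕ}
    (hLA : ∀ a ∈ insert v A, (LA a).Finite ∧ (LA a).ncard = k)
    (hR : ∀ b ∈ B, (R b).Finite ∧ (R b).ncard = k)
    (hL₀ : ∀ u, u ∉ F → (L₀ u).Finite ∧ (L₀ u).ncard = k) (hv : LA v = L₀ v) :
    ∃ L : V → Set ℕ, IsListAssignment L k ∧ (∀ a ∈ insert v A, L a = LA a) ∧
      (∀ b ∈ B, L b = R b) ∧ (∀ a ∈ insert v A, ∀ b ∈ B, ∀ c ∈ C a b, L c = R b) ∧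
      ∀ u, u ∉ F → L u = L₀ u := by
  classical
  obtain ⟨Lc, hLcC, hLc⟩ := h.pairwiseDisjoint.exists_eqOn (fun p _ => R p.2) L₀
  set L := (insert v A).piecewise LA (B.piecewise R Lc) with hL
  have hLB : ∀ b ∈ B, L b = R b := fun b hb => by
    rw [hL, Set.piecewise_eq_of_notMem _ _ _ fun hb' => h.ne_of_mem hb' hb rfl,
      Set.piecewise_eq_of_mem _ _ _ hb]
  have hLC : ∀ a ∈ insert v A, ∀ b ∈ B, ∀ c ∈ C a b, L c = R b := fun a ha b hb c hc => by
    rw [hL, Set.piecewise_eq_of_notMem _ _ _ (h.notMem_insert_of_mem ha hb hc),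
      Set.piecewise_eq_of_notMem _ _ _ (h.notMem_right_of_mem ha hb hc)]
    exact hLcC (a, b) ⟨ha, hb⟩ hc
  have hL₀' : ∀ u, u ∉ F → L u = L₀ u := fun u hu => by
    rw [h.mem_iff, not_or] at hu
    obtain ⟨huAB, huC⟩ := hu
    by_cases huv : u = v
    · rw [hL, huv, Set.piecewise_eq_of_mem _ _ _ (Set.mem_insert v A), hv]
    rw [hL, Set.piecewise_eq_of_notMem _ _ _ fun hu' => hu'.elim huv fun huA => huAB (Or.inl huA),
      Set.piecewise_eq_of_notMem _ _ _ fun huB => huAB (Or.inr huB)]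
    exact hLc u fun p hp hup => huC ⟨p.1, hp.1, p.2, hp.2, hup⟩
  refine ⟨L, fun x => ?_, fun a ha => Set.piecewise_eq_of_mem _ _ _ ha, hLB, hLC, hL₀'⟩
  by_cases hx : x ∈ F
  · rcases h.mem_iff.1 hx with (hxA | hxB) | ⟨a, ha, b, hb, hxC⟩
    · rw [hL, Set.piecewise_eq_of_mem _ _ _ (Set.mem_insert_of_mem v hxA)]
      exact hLA x (Set.mem_insert_of_mem v hxA)
    · rw [hLB x hxB]; exact hR x hxB
    · rw [hLC a ha b hb x hxC]; exact hR b hb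
  · rw [hL₀' x hx]; exact hL₀ x hx

/-- Give the vertices of `insert v A` pairwise disjoint lists, enumerate by `Option B` the
`k ^ k` choices of colours on them, and give each `b` (and its switchers) the image of the
choice it indexes: only the choice indexed by `none` is then blocked by no `b`. -/
theorem exists_listAssignment_existsUnique (h : IsForcerOn G k v F A B C) (hk : 2 ≤ k)
    (L₀ : V → Set ℕ) (hL₀ : ∀ u, u ∉ F → (L₀ u).Finite ∧ (L₀ u).ncard = k) :
    ∃ L, IsListAssignment L k ∧ (∀ u, u ∉ F → L u = L₀ u) ∧ ∃! c, LAdmissible G F L v c := by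
  classical
  have hA := h.finite_left.insert v
  have := hA.to_subtype
  have := h.finite_right.to_subtype
  obtain ⟨LA, hLAv, hLA', hLAd⟩ :=
    exists_pairwiseDisjoint_ncard_eq h.finite_left v (hL₀ v h.notMem)
  have : ∀ a : ↥(insert v A), Finite (LA a) := fun a => (hLA' a a.2).1.to_subtype
  obtain ⟨e⟩ : Nonempty (Option B ≃ ((a : ↥(insert v A)) → LA a)) := by
    refine Finite.card_eq.1 ?_
    rw [Finite.card_option, Nat.card_pi_eq_pow_ncard hA fun a ha => (hLA' a ha).2,
      Nat.card_coe_set_eq, h.ncard_right, h.ncard_insert (by omega)]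
    have := Nat.one_le_pow k k (by omega)
    omega
  let rg (ψ : (a : ↥(insert v A)) → LA a) : Set ℕ := Set.range fun a => (ψ a : ℕ)
  have hrg : ∀ ψ, (rg ψ).Finite ∧ (rg ψ).ncard = k := fun ψ => ⟨Set.finite_range _, by
    rw [Set.ncard_range_of_injective (hLAd.injective_val_tuple ψ), Nat.card_coe_set_eq,
      h.ncard_insert (by omega)]⟩
  let R (x : V) : Set ℕ := if hx : x ∈ B then rg (e (some ⟨x, hx⟩)) else ∅
  have hR : ∀ b (hb : b ∈ B), R b = rg (e (some ⟨b, hb⟩)) := fun b hb => dif_pos hb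
  obtain ⟨L, hL, hLA'', hLB, hLC, hL₀'⟩ := h.exists_listAssignment_extend hLA'
    (fun b hb => hR b hb ▸ hrg _) hL₀ hLAv
  obtain ⟨φ, hφ, hφA, hφv⟩ := exists_isLColoring_image_eq (hL.nonempty (by omega))
    (fun a => (e none a : ℕ)) fun a => by rw [hLA'' a a.2]; exact (e none a).2
  refine ⟨L, hL, hL₀', h.existsUnique_lAdmissible hk hL hφ (fun b hb hsub => ?_)
    (fun ρ hρ hρv => ?_) fun a ha b hb c hc => (hLC a ha b hb c hc).trans (hLB b hb).symm⟩
  · rw [hφA, hLB b hb, hR b hb] at hsub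
    exact Option.some_ne_none _ <| e.injective <| hLAd.injective_range_tuple <|
      Set.eq_of_subset_of_ncard_le hsub (by rw [(hrg _).2, (hrg _).2]) (hrg _).1
  · let ψ : (a : ↥(insert v A)) → LA a := fun a => ⟨ρ a, hLA'' a a.2 ▸ hρ a⟩
    obtain hψ | ⟨b, hψ⟩ := (e.symm ψ).eq_none_or_eq_some
    · refine absurd ?_ hρv
      have hψ' : ψ = e none := by rw [← hψ, e.apply_symm_apply]
      exact (congrArg (fun ψ => (ψ ⟨v, Set.mem_insert v A⟩ : ℕ)) hψ').trans
        (hφv ⟨v, Set.mem_insert v A⟩).symm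
    · refine ⟨b, b.2, ?_⟩
      rw [hLB b b.2, hR b b.2, ← hψ, e.apply_symm_apply, Set.image_eq_range]

end IsForcerOn

/-- Properties of `k`-forcers. -/
theorem forcer_properties (G : SimpleGraph V) (k : ℕ) (hk : 2 ≤ k) (v : V) (F : Set V)
    (hF : IsForcer G k v F) :
    ((∀ T : Set V, IsInducedComplete G (k + 2) T ∨ IsInducedCycle G 4 T → Disjoint T F) ∧
     (∀ L : V → Set ℕ, IsListAssignment L k → ∃ c, LAdmissible G F L v c) ∧
     (∀ L₀ : V → Set ℕ, (∀ u, u ∉ F → (L₀ u).Finite ∧ (L₀ u).ncard = k) →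
       ∃ L : V → Set ℕ, IsListAssignment L k ∧ (∀ u, u ∉ F → L u = L₀ u) ∧
         ∃! c, LAdmissible G F L v c)) := by
  obtain ⟨A, B, C, h⟩ := hF.exists_isForcerOn
  exact ⟨fun T hT => hT.elim (h.disjoint_of_isInducedComplete (by omega))
      h.disjoint_of_isInducedCycle,
    fun L hL => h.exists_lAdmissible hk hL,
    fun L₀ hL₀ => h.exists_listAssignment_existsUnique hk L₀ hL₀⟩
end

section
/- Every K_3-free graph is star 2-choosable; that is, for every triangle-free graph G and every 2-list assignment L of G, there exists an L-coloring of G in which no maximal star is monochromatic. -/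
variable {V : Type*}

/-!
In a triangle-free graph the leaves of a star are automatically independent, so the maximal stars
are exactly the closed neighbourhoods `N[v]` of non-isolated vertices. It therefore suffices to
find an `L`-coloring in which every non-isolated vertex has a neighbour of another colour. Root
each connected component and colour vertices in order of their distance to the root, giving each
non-root vertex a colour of its list different from that of a neighbour one step closer to the
root; a root then differs from each of its neighbours.
-/

namespace SimpleGraph

variable (G : SimpleGraph V)

theorem exists_adj_dist_add_one_eq {r v : V} (h : 0 < G.dist r v) :
    ∃ u, G.Adj v u ∧ G.dist r u + 1 = G.dist r v := by
  obtain ⟨p, hp⟩ := exists_walk_of_dist_ne_zero h.ne'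
  have hvr : v ≠ r := fun hvr => by subst hvr; simp at h
  obtain ⟨u, hvu, q, hq⟩ := Walk.exists_eq_cons_of_ne hvr p.reverse
  have hlen : q.length + 1 = G.dist r v := by
    rw [← hp, ← p.length_reverse, hq, Walk.length_cons]
  have hru : G.dist r u ≤ q.length := dist_comm (G := G) ▸ dist_le q
  have hrv : G.dist r v ≤ G.dist r u + G.dist u v := hvu.symm.reachable.dist_triangle_right r
  rw [dist_eq_one_iff_adj.mpr hvu.symm] at hrv
  exact ⟨u, hvu, by omega⟩

noncomputable def componentRoot (v : V) : V := (G.connectedComponentMk v).out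

theorem reachable_componentRoot (v : V) : G.Reachable (G.componentRoot v) v :=
  ConnectedComponent.exact (Quot.out_eq _)

theorem Adj.componentRoot_eq {G : SimpleGraph V} {u v : V} (h : G.Adj u v) :
    G.componentRoot u = G.componentRoot v := by
  rw [componentRoot, componentRoot, ConnectedComponent.sound h.reachable]

theorem exists_bfs_forest : ∃ (d : V → ℕ) (par : V → V),
    (∀ v, 0 < d v → G.Adj v (par v) ∧ d (par v) + 1 = d v) ∧
    ∀ v u, d v = 0 → G.Adj v u → 0 < d u ∧ par u = v := by
  let d v := G.dist (G.componentRoot v) v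
  have hroot : ∀ v, d v = 0 → G.componentRoot v = v := fun v h =>
    (G.reachable_componentRoot v).dist_eq_zero_iff.mp h
  have hpar : ∀ v, ∃ u, 0 < d v → G.Adj v u ∧ d u + 1 = d v := fun v => by
    by_cases hv : 0 < d v
    · obtain ⟨u, hvu, hu⟩ := G.exists_adj_dist_add_one_eq hv
      exact ⟨u, fun _ => ⟨hvu, by simpa only [d, hvu.symm.componentRoot_eq] using hu⟩⟩
    · exact ⟨v, fun h => absurd h hv⟩
  choose par hpar using hpar
  refine ⟨d, par, hpar, fun v u hv hvu => ?_⟩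
  have hu : G.componentRoot u = v := hvu.componentRoot_eq.symm.trans (hroot v hv)
  have hdu : d u = 1 := by simp only [d, hu, dist_eq_one_iff_adj.mpr hvu]
  obtain ⟨hadj, hd⟩ := hpar u (by omega)
  refine ⟨by omega, ?_⟩
  rw [← hroot (par u) (by omega), hadj.symm.componentRoot_eq, hu]

end SimpleGraph

theorem exists_lColoring_ne_parent {L : V → Set ℕ} (hL : ∀ v c, ∃ x ∈ L v, x ≠ c)
    (d : V → ℕ) (par : V → V) (hpar : ∀ v, 0 < d v → d (par v) + 1 = d v) :
    ∃ ρ, IsLColoring L ρ ∧ ∀ v, 0 < d v → ρ v ≠ ρ (par v) := by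
  choose pick hpick_mem hpick_ne using hL
  let col : ℕ → V → ℕ := fun n =>
    Nat.rec (fun v => pick v 0) (fun _ ih v => pick v (ih (par v))) n
  have hcol : ∀ n v, col n v ∈ L v := by
    rintro (_ | _) v <;> exact hpick_mem _ _
  refine ⟨fun v => col (d v) v, fun v => hcol _ v, fun v hv => ?_⟩
  obtain ⟨n, hn⟩ : ∃ n, d v = n + 1 := ⟨d v - 1, by omega⟩
  have hdp : d (par v) = n := by have := hpar v hv; omega
  simp only [hn, hdp]
  exact hpick_ne _ _

theorem SimpleGraph.exists_lColoring_exists_adj_ne (G : SimpleGraph V) {L : V → Set ℕ}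
    (hL : ∀ v c, ∃ x ∈ L v, x ≠ c) :
    ∃ ρ, IsLColoring L ρ ∧ ∀ v u, G.Adj v u → ∃ w, G.Adj v w ∧ ρ w ≠ ρ v := by
  obtain ⟨d, par, hpar, hroot⟩ := G.exists_bfs_forest
  obtain ⟨ρ, hρL, hρ⟩ := exists_lColoring_ne_parent hL d par fun v hv => (hpar v hv).2
  refine ⟨ρ, hρL, fun v u hvu => ?_⟩
  by_cases hv : 0 < d v
  · exact ⟨par v, (hpar v hv).1, (hρ v hv).symm⟩
  · obtain ⟨hu, rfl⟩ := hroot v u (by omega) hvu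
    exact ⟨u, hvu, hρ u hu⟩

section Star

variable {G : SimpleGraph V} {v : V} {W : Set V}

theorem IsStarC.subset_closedNbhd (hW : IsStarC G v W) : W ⊆ closedNbhd G v := fun x hx => by
  by_cases hxv : x = v
  · exact hxv ▸ Set.mem_insert x _
  · exact Set.mem_insert_of_mem _ (hW.2.2.1 x ⟨hx, hxv⟩)

theorem IsStarC.isStarC_closedNbhd (hG : G.CliqueFree 3) (hW : IsStarC G v W) :
    IsStarC G v (closedNbhd G v) := by
  have hnbhd : closedNbhd G v \ {v} = G.neighborSet v := by
    ext x
    simp only [closedNbhd, Set.mem_sdiff, Set.mem_insert_iff, Set.mem_singleton_iff,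
      SimpleGraph.mem_neighborSet]
    exact ⟨fun h => h.1.resolve_left h.2, fun h => ⟨Or.inr h, h.ne'⟩⟩
  obtain ⟨u, hu⟩ := hW.2.1
  refine ⟨Set.mem_insert v _, ?_, ?_, ?_⟩ <;> rw [hnbhd]
  · exact ⟨u, hW.2.2.1 u hu⟩
  · exact fun _ h => h
  · exact fun x hx y hy hxy =>
      G.isIndepSet_neighborSet_of_triangleFree hG v hx hy hxy.ne hxy

theorem IsMaxStar.closedNbhd_eq (hG : G.CliqueFree 3) (hW : IsMaxStar G W)
    (hv : IsStarC G v W) : closedNbhd G v = W :=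
  hW.2 _ ⟨v, hv.isStarC_closedNbhd hG⟩ hv.subset_closedNbhd

end Star

/-- Every triangle-free graph is star 2-choosable. -/
theorem triangleFree_star_two_choosable (G : SimpleGraph V) (hG : G.CliqueFree 3) :
    StarChoosable G 2 := by
  intro L hL
  have hL' : ∀ v c, ∃ x ∈ L v, x ≠ c := fun v =>
    Set.exists_ne_of_one_lt_ncard (by rw [(hL v).2]; norm_num)
  obtain ⟨ρ, hρL, hρ⟩ := G.exists_lColoring_exists_adj_ne hL'
  refine ⟨ρ, hρL, fun W hW hmono => ?_⟩
  obtain ⟨v, hv⟩ := hW.1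
  have hWeq := hW.closedNbhd_eq hG hv
  obtain ⟨u₀, hu₀⟩ := hv.2.1
  obtain ⟨u, hvu, hne⟩ := hρ v u₀ (hv.2.2.1 u₀ hu₀)
  exact hne (hmono u (hWeq ▸ Set.mem_insert_of_mem v hvu) v hv.1)
end

section
/- Every K_3-free graph that is biclique-dominated is biclique 2-choosable; that is, if G is triangle-free and every maximal biclique of G is either a star or contains a vertex false dominated by another vertex of G, then for every 2-list assignment L of G there exists an L-coloring in which no maximal biclique is monochromatic. -/
variable {V : Type*}

namespace BCAux

variable {V : Type*}

/-- A good partial coloring (as a set of vertex-color pairs). -/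
def Good (f : V → V) (L : V → Set ℕ) (s : Set (V × ℕ)) : Prop :=
  (∀ p ∈ s, p.2 ∈ L p.1) ∧
  (∀ v a b, (v, a) ∈ s → (v, b) ∈ s → a = b) ∧
  (∀ v a, (v, a) ∈ s → ∃ b, (f v, b) ∈ s) ∧
  (∀ v a b, (v, a) ∈ s → (f v, b) ∈ s → f v ≠ v → a ≠ b)

lemma Good.union {f : V → V} {L : V → Set ℕ} {s : Set (V × ℕ)} (hs : Good f L s)
    {t : Set (V × ℕ)}
    (h1 : ∀ p ∈ t, p.2 ∈ L p.1)
    (h2 : ∀ v a b, (v, a) ∈ t → (v, b) ∈ t → a = b)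
    (h3 : ∀ v a, (v, a) ∈ t → ∀ b, (v, b) ∉ s)
    (h4 : ∀ v a, (v, a) ∈ t → (∃ b, (f v, b) ∈ t) ∨ (∃ b, (f v, b) ∈ s))
    (h5 : ∀ v a b, (v, a) ∈ t → ((f v, b) ∈ t ∨ (f v, b) ∈ s) → f v ≠ v → a ≠ b) :
    Good f L (s ∪ t) := by
  refine ⟨?_, ?_, ?_, ?_⟩
  · rintro p (hp | hp)
    · exact hs.1 p hp
    · exact h1 p hp
  · rintro v a b (ha | ha) (hb | hb)
    · exact hs.2.1 v a b ha hb
    · exact absurd ha (h3 v b hb a)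
    · exact absurd hb (h3 v a ha b)
    · exact h2 v a b ha hb
  · rintro v a (ha | ha)
    · obtain ⟨b, hb⟩ := hs.2.2.1 v a ha
      exact ⟨b, Or.inl hb⟩
    · rcases h4 v a ha with ⟨b, hb⟩ | ⟨b, hb⟩
      · exact ⟨b, Or.inr hb⟩
      · exact ⟨b, Or.inl hb⟩
  · rintro v a b (ha | ha) (hb | hb) hne
    · exact hs.2.2.2 v a b ha hb hne
    · obtain ⟨c, hc⟩ := hs.2.2.1 v a ha
      exact absurd hc (h3 (f v) b hb c)
    · exact h5 v a b ha (Or.inr hb) hne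
    · exact h5 v a b ha (Or.inl hb) hne

lemma seq_exists (u : ℕ → Set ℕ) (h : ∀ n b, ∃ a ∈ u n, a ≠ b) :
    ∃ g : ℕ → ℕ, (∀ n, g n ∈ u n) ∧ ∀ n, g (n + 1) ≠ g n := by
  choose F hF1 hF2 using h
  refine ⟨fun n => Nat.rec (F 0 0) (fun n ih => F (n + 1) ih) n, fun n => ?_, fun n => hF2 _ _⟩
  induction n with
  | zero => exact hF1 0 0
  | succ n _ => exact hF1 (n + 1) _

theorem dodge (f : V → V) (L : V → Set ℕ)
    (hL : ∀ v, (L v).Finite ∧ (L v).ncard = 2)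
    (hf : ∀ v n, 1 ≤ n → f^[n] v = v → f (f v) = v) :
    ∃ ρ : V → ℕ, (∀ v, ρ v ∈ L v) ∧ ∀ v, f v ≠ v → ρ v ≠ ρ (f v) := by
  classical
  have hLne : ∀ v, (L v).Nonempty := fun v =>
    Set.nonempty_of_ncard_ne_zero (by rw [(hL v).2]; norm_num)
  have hLav : ∀ v b, ∃ a ∈ L v, a ≠ b := by
    intro v b
    obtain ⟨x, y, hxy, hs⟩ := Set.ncard_eq_two.1 (hL v).2
    by_cases hbx : b = x
    · exact ⟨y, by rw [hs]; exact Or.inr rfl, by rw [hbx]; exact hxy.symm⟩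
    · exact ⟨x, by rw [hs]; exact Or.inl rfl, fun h => hbx h.symm⟩
  set S : Set (Set (V × ℕ)) := {s | Good f L s} with hS
  have hchainub : ∀ c ⊆ S, IsChain (· ⊆ ·) c → c.Nonempty → ∃ ub ∈ S, ∀ s ∈ c, s ⊆ ub := by
    intro c hcS hch _
    refine ⟨⋃₀ c, ⟨?_, ?_, ?_, ?_⟩, fun s hs => Set.subset_sUnion_of_mem hs⟩
    · rintro p ⟨s, hs, hp⟩; exact (hcS hs).1 p hp
    · rintro v a b ⟨s, hs, ha⟩ ⟨s', hs', hb⟩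
      rcases hch.total hs hs' with h | h
      · exact (hcS hs').2.1 v a b (h ha) hb
      · exact (hcS hs).2.1 v a b ha (h hb)
    · rintro v a ⟨s, hs, ha⟩
      obtain ⟨b, hb⟩ := (hcS hs).2.2.1 v a ha
      exact ⟨b, s, hs, hb⟩
    · rintro v a b ⟨s, hs, ha⟩ ⟨s', hs', hb⟩ hne
      rcases hch.total hs hs' with h | h
      · exact (hcS hs').2.2.2 v a b (h ha) hb hne
      · exact (hcS hs).2.2.2 v a b ha (h hb) hne
  have h₀ : (∅ : Set (V × ℕ)) ∈ S := by
    refine ⟨?_, ?_, ?_, ?_⟩ <;> simp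
  obtain ⟨m, -, hmax⟩ := zorn_subset_nonempty S hchainub ∅ h₀
  have hmS : Good f L m := hmax.1
  -- totality
  have htot : ∀ v, ∃ a, (v, a) ∈ m := by
    by_contra hcon
    push_neg at hcon
    obtain ⟨v₀, hv₀⟩ := hcon
    set A : Set V := {v | ∃ a, (v, a) ∈ m} with hA
    have hv₀A : v₀ ∉ A := fun ⟨a, ha⟩ => hv₀ a ha
    have hext : ∀ t : Set (V × ℕ),
        (∀ p ∈ t, p.2 ∈ L p.1) →
        (∀ v a b, (v, a) ∈ t → (v, b) ∈ t → a = b) →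
        (∀ v a, (v, a) ∈ t → ∀ b, (v, b) ∉ m) →
        (∀ v a, (v, a) ∈ t → (∃ b, (f v, b) ∈ t) ∨ (∃ b, (f v, b) ∈ m)) →
        (∀ v a b, (v, a) ∈ t → ((f v, b) ∈ t ∨ (f v, b) ∈ m) → f v ≠ v → a ≠ b) →
        t.Nonempty → False := by
      intro t h1 h2 h3 h4 h5 ⟨p, hp⟩
      have hmem : m ∪ t ∈ S := hmS.union h1 h2 h3 h4 h5
      have := hmax.2 hmem Set.subset_union_left
      have hpm : p ∈ m := this (Or.inr hp)
      exact h3 p.1 p.2 hp p.2 hpm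
    by_cases hc1 : ∃ k, 1 ≤ k ∧ f^[k] v₀ ∈ A
    · -- point at an already-colored vertex
      set k := Nat.find hc1 with hk
      obtain ⟨hk1, hk2⟩ := Nat.find_spec hc1
      set w := f^[k - 1] v₀ with hwdef
      have hfw : f w = f^[k] v₀ := by
        have h' : k - 1 + 1 = k := by omega
        rw [hwdef]
        conv_rhs => rw [← h']
        exact (Function.iterate_succ_apply' f (k - 1) v₀).symm
      have hwA : w ∉ A := by
        rcases Nat.lt_or_ge k 2 with hk' | hk'
        · have : k = 1 := by omega
          rw [hwdef, this]
          simpa using hv₀A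
        · have hklt : k - 1 < k := by omega
          have := Nat.find_min hc1 hklt
          rw [hwdef]
          intro hcA
          exact this ⟨by omega, hcA⟩
      obtain ⟨b, hb⟩ := hk2
      obtain ⟨a, haL, hab⟩ := hLav w b
      refine hext {(w, a)} ?_ ?_ ?_ ?_ ?_ ⟨(w, a), rfl⟩
      · rintro p hp; rw [Set.mem_singleton_iff] at hp; rw [hp]; exact haL
      · rintro v x y hx hy
        rw [Set.mem_singleton_iff, Prod.mk.injEq] at hx hy
        rw [hx.2, hy.2]
      · rintro v x hx y hy
        rw [Set.mem_singleton_iff, Prod.mk.injEq] at hx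
        exact hwA ⟨y, hx.1 ▸ hy⟩
      · rintro v x hx
        rw [Set.mem_singleton_iff, Prod.mk.injEq] at hx
        refine Or.inr ⟨b, ?_⟩
        rw [hx.1, hfw]; exact hb
      · rintro v x y hx hy hne
        rw [Set.mem_singleton_iff, Prod.mk.injEq] at hx
        obtain ⟨hv, hxa⟩ := hx
        subst hv
        rcases hy with hy | hy
        · rw [Set.mem_singleton_iff, Prod.mk.injEq] at hy
          exact absurd hy.1 hne
        · have : y = b := hmS.2.1 (f w) y b hy (hfw ▸ hb)
          rw [hxa, this]; exact hab
    · push_neg at hc1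
      have horb : ∀ k, f^[k] v₀ ∉ A := by
        intro k
        rcases Nat.eq_zero_or_pos k with hk | hk
        · rw [hk]; simpa using hv₀A
        · exact hc1 k hk
      by_cases hc2 : ∃ p q, p < q ∧ f^[p] v₀ = f^[q] v₀
      · obtain ⟨p, q, hpq, heq⟩ := hc2
        set c := f^[p] v₀ with hcdef
        have hper : f^[q - p] c = c := by
          rw [hcdef, ← Function.iterate_add_apply]
          have : q - p + p = q := by omega
          rw [this, ← heq]
        have h2c : f (f c) = c := hf c (q - p) (by omega) hper
        have hcA : ∀ y, (c, y) ∉ m := fun y hy => horb p ⟨y, hy⟩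
        have hfcA : ∀ y, (f c, y) ∉ m := by
          intro y hy
          refine horb (p + 1) ⟨y, ?_⟩
          rwa [Function.iterate_succ_apply', ← hcdef]
        by_cases hfc : f c = c
        · obtain ⟨a, haL⟩ := hLne c
          refine hext {(c, a)} ?_ ?_ ?_ ?_ ?_ ⟨(c, a), rfl⟩
          · rintro p' hp'; rw [Set.mem_singleton_iff] at hp'; rw [hp']; exact haL
          · rintro v x y hx hy
            rw [Set.mem_singleton_iff, Prod.mk.injEq] at hx hy
            rw [hx.2, hy.2]
          · rintro v x hx y hy
            rw [Set.mem_singleton_iff, Prod.mk.injEq] at hx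
            exact hcA y (hx.1 ▸ hy)
          · rintro v x hx
            rw [Set.mem_singleton_iff, Prod.mk.injEq] at hx
            refine Or.inl ⟨a, ?_⟩
            rw [hx.1, hfc]; rfl
          · rintro v x y hx hy hne
            rw [Set.mem_singleton_iff, Prod.mk.injEq] at hx
            exact absurd (hx.1 ▸ hfc) hne
        · obtain ⟨a, haL⟩ := hLne c
          obtain ⟨b, hbL, hba⟩ := hLav (f c) a
          have hmemt : ∀ v x, ((v, x) ∈ ({(c, a), (f c, b)} : Set (V × ℕ))) ↔
              (v = c ∧ x = a) ∨ (v = f c ∧ x = b) := by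
            intro v x
            simp [Prod.mk.injEq]
          refine hext {(c, a), (f c, b)} ?_ ?_ ?_ ?_ ?_ ⟨(c, a), Or.inl rfl⟩
          · rintro ⟨v, x⟩ hp'
            rcases (hmemt v x).1 hp' with ⟨rfl, rfl⟩ | ⟨rfl, rfl⟩
            · exact haL
            · exact hbL
          · rintro v x y hx hy
            rcases (hmemt v x).1 hx with ⟨hv, rfl⟩ | ⟨hv, rfl⟩ <;>
              rcases (hmemt v y).1 hy with ⟨hv', rfl⟩ | ⟨hv', rfl⟩
            · rfl
            · exact absurd (hv.symm.trans hv') (Ne.symm hfc)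
            · exact absurd (hv.symm.trans hv') hfc
            · rfl
          · rintro v x hx y hy
            rcases (hmemt v x).1 hx with ⟨rfl, rfl⟩ | ⟨rfl, rfl⟩
            · exact hcA y hy
            · exact hfcA y hy
          · rintro v x hx
            rcases (hmemt v x).1 hx with ⟨rfl, rfl⟩ | ⟨rfl, rfl⟩
            · exact Or.inl ⟨b, (hmemt (f c) b).2 (Or.inr ⟨rfl, rfl⟩)⟩
            · exact Or.inl ⟨a, by rw [h2c]; exact (hmemt c a).2 (Or.inl ⟨rfl, rfl⟩)⟩
          · rintro v x y hx hy hne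
            rcases (hmemt v x).1 hx with ⟨rfl, rfl⟩ | ⟨rfl, rfl⟩
            · rcases hy with hy | hy
              · rcases (hmemt (f c) y).1 hy with ⟨hv', rfl⟩ | ⟨hv', rfl⟩
                · exact absurd hv' hfc
                · exact hba.symm
              · exact absurd hy (hfcA y)
            · rcases hy with hy | hy
              · rw [h2c] at hy
                rcases (hmemt c y).1 hy with ⟨hv', rfl⟩ | ⟨hv', rfl⟩
                · exact hba
                · exact absurd hv'.symm hfc
              · rw [h2c] at hy
                exact absurd hy (hcA y)
      · push_neg at hc2
        have hinj : ∀ p q, f^[p] v₀ = f^[q] v₀ → p = q := by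
          intro p q h
          rcases lt_trichotomy p q with h' | h' | h'
          · exact absurd h (hc2 p q h')
          · exact h'
          · exact absurd h.symm (hc2 q p h')
        obtain ⟨g, hg1, hg2⟩ := seq_exists (fun n => L (f^[n] v₀)) (fun n b => hLav _ b)
        refine hext {p : V × ℕ | ∃ n, p = (f^[n] v₀, g n)} ?_ ?_ ?_ ?_ ?_
          ⟨(v₀, g 0), ⟨0, rfl⟩⟩
        · rintro p ⟨n, rfl⟩; exact hg1 n
        · rintro v x y ⟨n, hn⟩ ⟨n', hn'⟩
          rw [Prod.mk.injEq] at hn hn'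
          have := hinj n n' (hn.1.symm.trans hn'.1)
          rw [hn.2, hn'.2, this]
        · rintro v x ⟨n, hn⟩ y hy
          rw [Prod.mk.injEq] at hn
          exact horb n ⟨y, hn.1 ▸ hy⟩
        · rintro v x ⟨n, hn⟩
          rw [Prod.mk.injEq] at hn
          exact Or.inl ⟨g (n + 1), ⟨n + 1, by rw [Function.iterate_succ_apply', hn.1]⟩⟩
        · rintro v x y ⟨n, hn⟩ hy hne
          rw [Prod.mk.injEq] at hn
          obtain ⟨hv, hxval⟩ := hn
          subst hv
          rcases hy with ⟨n', hn'⟩ | hy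
          · rw [Prod.mk.injEq] at hn'
            have hkey : f^[n + 1] v₀ = f^[n'] v₀ := by
              rw [Function.iterate_succ_apply']; exact hn'.1
            have := hinj (n + 1) n' hkey
            rw [hxval, hn'.2, ← this]
            exact (hg2 n).symm
          · exfalso
            refine horb (n + 1) ⟨y, ?_⟩
            rw [Function.iterate_succ_apply']
            exact hy
  choose ρ hρ using htot
  exact ⟨ρ, fun v => hmS.1 (v, ρ v) (hρ v),
    fun v hne => hmS.2.2.2 v (ρ v) (ρ (f v)) (hρ v) (hρ (f v)) hne⟩


section Graph

variable {V : Type*}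

lemma no_tri {G : SimpleGraph V} (hG : G.CliqueFree 3) {a b c : V}
    (hab : G.Adj a b) (hac : G.Adj a c) (hbc : G.Adj b c) : False := by
  classical
  exact hG {a, b, c} (SimpleGraph.is3Clique_triple_iff.2 ⟨hab, hac, hbc⟩)

/-- The set of (false) dominators of `v`. -/
def DomSet (G : SimpleGraph V) (v : V) : Set V :=
  {w | w ≠ v ∧ G.neighborSet v ⊆ G.neighborSet w}

/-- The closed star of `v` is a maximal biclique. -/
def Qv (G : SimpleGraph V) (v : V) : Prop :=
  IsMaxBiclique G (insert v (G.neighborSet v))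

/-- `v` is an (undominated) relevant star center. -/
def Ctr (G : SimpleGraph V) (v : V) : Prop := ¬(DomSet G v).Nonempty ∧ Qv G v

/-- `v` is unconstrained. -/
def Unc (G : SimpleGraph V) (v : V) : Prop := ¬(DomSet G v).Nonempty ∧ ¬Qv G v

/-- The false-twin class of `v`. -/
def Cl (G : SimpleGraph V) (v : V) : Set V := {w | G.neighborSet w = G.neighborSet v}

noncomputable def pick [Nonempty V] (s : Set V) : V := Classical.epsilon (· ∈ s)

lemma pick_mem [Nonempty V] {s : Set V} (h : s.Nonempty) : pick s ∈ s :=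
  Classical.epsilon_spec h

lemma pick_spec [Nonempty V] {s : Set V} {x : V} (h : x ∈ s) : pick s ∈ s :=
  pick_mem (Set.nonempty_of_mem h)

lemma qv_nbr_nonempty {G : SimpleGraph V} {v : V} (h : Qv G v) :
    (G.neighborSet v).Nonempty := by
  obtain ⟨S, T, hS, hT, hdisj, huni, -, -, -⟩ := h.1
  by_contra hne
  rw [Set.not_nonempty_iff_eq_empty] at hne
  obtain ⟨s, hs⟩ := hS
  obtain ⟨t, ht⟩ := hT
  have hsv : s = v := by
    have h1 : s ∈ S ∪ T := Or.inl hs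
    rw [huni, hne] at h1
    simpa using h1
  have htv : t = v := by
    have h1 : t ∈ S ∪ T := Or.inr ht
    rw [huni, hne] at h1
    simpa using h1
  exact Set.disjoint_left.1 hdisj (hsv ▸ hs) (htv ▸ ht)

open Classical in
/-- The "dodge target" function. -/
noncomputable def fch [Nonempty V] (G : SimpleGraph V) (M : Set (V × V)) (v : V) : V :=
  if (DomSet G v).Nonempty then
    (if ∃ w, w ≠ v ∧ G.neighborSet w = G.neighborSet v then
      (if v = pick (Cl G v) then pick (Cl G v \ {pick (Cl G v)}) else pick (Cl G v))
     else pick (DomSet G v))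
  else
    if Qv G v then
      (if ∃ u ∈ G.neighborSet v, Unc G u then pick {u | u ∈ G.neighborSet v ∧ Unc G u}
       else if ∃ u ∈ G.neighborSet v, Ctr G u then
         (if ∃ b, (v, b) ∈ M then pick {b | (v, b) ∈ M}
          else pick {u | u ∈ G.neighborSet v ∧ Ctr G u})
       else pick (G.neighborSet v))
    else v

variable [Nonempty V] {G : SimpleGraph V} {M : Set (V × V)}

lemma fch_unc {v : V} (h : Unc G v) : fch G M v = v := by
  unfold fch
  rw [if_neg h.1, if_neg h.2]

lemma fch_dom {v : V} (h : (DomSet G v).Nonempty) :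
    fch G M v ≠ v ∧ G.neighborSet v ⊆ G.neighborSet (fch G M v) := by
  unfold fch
  rw [if_pos h]
  by_cases ht : ∃ w, w ≠ v ∧ G.neighborSet w = G.neighborSet v
  · rw [if_pos ht]
    have hvCl : v ∈ Cl G v := rfl
    by_cases hvp : v = pick (Cl G v)
    · rw [if_pos hvp]
      obtain ⟨w, hwv, hwN⟩ := ht
      have hneq : (Cl G v \ {pick (Cl G v)}).Nonempty :=
        ⟨w, hwN, by rw [← hvp]; exact hwv⟩
      have hq := pick_mem hneq
      have hqN : G.neighborSet (pick (Cl G v \ {pick (Cl G v)})) = G.neighborSet v := hq.1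
      constructor
      · intro hqv
        exact hq.2 (hqv.trans hvp)
      · rw [hqN]
    · rw [if_neg hvp]
      have hp := pick_mem ⟨v, hvCl⟩
      have hpN : G.neighborSet (pick (Cl G v)) = G.neighborSet v := hp
      constructor
      · intro h'
        exact hvp h'.symm
      · rw [hpN]
  · rw [if_neg ht]
    exact ⟨(pick_mem h).1, (pick_mem h).2⟩

lemma fch_dom_twin {v : V} (h : (DomSet G v).Nonempty)
    (ht : ∃ w, w ≠ v ∧ G.neighborSet w = G.neighborSet v) :
    fch G M v = pick (Cl G v) ∨ fch G M v = pick (Cl G v \ {pick (Cl G v)}) := by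
  unfold fch
  rw [if_pos h, if_pos ht]
  by_cases hvp : v = pick (Cl G v)
  · rw [if_pos hvp]; exact Or.inr rfl
  · rw [if_neg hvp]; exact Or.inl rfl

lemma fch_ctr_mem (hM1 : ∀ p ∈ M, Ctr G p.1 ∧ Ctr G p.2 ∧ G.Adj p.1 p.2)
    {v : V} (hv : Ctr G v) : fch G M v ∈ G.neighborSet v := by
  unfold fch
  rw [if_neg hv.1, if_pos hv.2]
  by_cases h1 : ∃ u ∈ G.neighborSet v, Unc G u
  · rw [if_pos h1]
    obtain ⟨u, hu1, hu2⟩ := h1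
    exact (pick_spec (s := {u | u ∈ G.neighborSet v ∧ Unc G u}) (x := u)
      (by exact ⟨hu1, hu2⟩)).1
  · rw [if_neg h1]
    by_cases h2 : ∃ u ∈ G.neighborSet v, Ctr G u
    · rw [if_pos h2]
      by_cases hc : ∃ b, (v, b) ∈ M
      · rw [if_pos hc]
        have hmem : (v, pick {b | (v, b) ∈ M}) ∈ M := pick_mem hc
        exact (G.mem_neighborSet v _).2 (hM1 _ hmem).2.2
      · rw [if_neg hc]
        obtain ⟨u, hu1, hu2⟩ := h2
        exact (pick_spec (s := {u | u ∈ G.neighborSet v ∧ Ctr G u}) (x := u)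
          (by exact ⟨hu1, hu2⟩)).1
    · rw [if_neg h2]
      exact pick_mem (qv_nbr_nonempty hv.2)

lemma fch_ctr_R1 {v : V} (hv : Ctr G v) (h1 : ∃ u ∈ G.neighborSet v, Unc G u) :
    Unc G (fch G M v) := by
  unfold fch
  rw [if_neg hv.1, if_pos hv.2, if_pos h1]
  obtain ⟨u, hu1, hu2⟩ := h1
  exact (pick_spec (s := {u | u ∈ G.neighborSet v ∧ Unc G u}) (x := u)
    (by exact ⟨hu1, hu2⟩)).2

lemma fch_ctr_cov (hM1 : ∀ p ∈ M, Ctr G p.1 ∧ Ctr G p.2 ∧ G.Adj p.1 p.2)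
    {v : V} (hv : Ctr G v) (h1 : ¬∃ u ∈ G.neighborSet v, Unc G u)
    (hc : ∃ b, (v, b) ∈ M) : (v, fch G M v) ∈ M := by
  have h2 : ∃ u ∈ G.neighborSet v, Ctr G u := by
    obtain ⟨b, hb⟩ := hc
    exact ⟨b, (G.mem_neighborSet v b).2 (hM1 _ hb).2.2, (hM1 _ hb).2.1⟩
  unfold fch
  rw [if_neg hv.1, if_pos hv.2, if_neg h1, if_pos h2, if_pos hc]
  exact pick_mem hc

lemma fch_ctr_unc2 {v : V} (hv : Ctr G v) (h1 : ¬∃ u ∈ G.neighborSet v, Unc G u)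
    (h2 : ∃ u ∈ G.neighborSet v, Ctr G u) (hc : ¬∃ b, (v, b) ∈ M) :
    fch G M v ∈ G.neighborSet v ∧ Ctr G (fch G M v) := by
  unfold fch
  rw [if_neg hv.1, if_pos hv.2, if_neg h1, if_pos h2, if_neg hc]
  obtain ⟨u, hu1, hu2⟩ := h2
  have hp := pick_spec (s := {u | u ∈ G.neighborSet v ∧ Ctr G u}) (x := u)
    (by exact ⟨hu1, hu2⟩)
  exact ⟨hp.1, hp.2⟩

theorem fch_nocycle (hM1 : ∀ p ∈ M, Ctr G p.1 ∧ Ctr G p.2 ∧ G.Adj p.1 p.2)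
    (hM2 : ∀ p ∈ M, (p.2, p.1) ∈ M)
    (hM3 : ∀ a b c : V, (a, b) ∈ M → (a, c) ∈ M → b = c)
    (hMmax : ∀ a b : V, Ctr G a → Ctr G b → G.Adj a b →
      (∃ c, (a, c) ∈ M) ∨ (∃ c, (b, c) ∈ M)) :
    ∀ v n, 1 ≤ n → (fch G M)^[n] v = v → fch G M (fch G M v) = v := by
  classical
  intro v n hn hv
  set f := fch G M with hfdef
  have hex : ∃ k, 1 ≤ k ∧ f^[k] v = v := ⟨n, hn, hv⟩
  set n₀ := Nat.find hex with hn₀def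
  obtain ⟨hn₀1, hn₀v⟩ := Nat.find_spec hex
  rw [← hn₀def] at hn₀1 hn₀v
  have hmin : ∀ k, 1 ≤ k → f^[k] v = v → n₀ ≤ k := fun k h1 h2 => Nat.find_min' hex ⟨h1, h2⟩
  rcases Nat.lt_or_ge n₀ 3 with hn₀3 | hn₀3
  · rcases (by omega : n₀ = 1 ∨ n₀ = 2) with h | h
    · rw [h, Function.iterate_one] at hn₀v
      rw [hn₀v]
      exact hn₀v
    · rw [h, show (2 : ℕ) = 1 + 1 from rfl, Function.iterate_add_apply,
        Function.iterate_one] at hn₀v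
      exact hn₀v
  · exfalso
    set O : Set V := {y | ∃ i, f^[i] v = y} with hOdef
    have hvO : v ∈ O := ⟨0, rfl⟩
    have hOit : ∀ y ∈ O, ∀ b, f^[b] y ∈ O := by
      rintro y ⟨i, rfl⟩ b
      exact ⟨b + i, by rw [Function.iterate_add_apply]⟩
    have hOf : ∀ y ∈ O, f y ∈ O := by
      intro y hy
      have h1 := hOit y hy 1
      rwa [Function.iterate_one] at h1
    have hOper : ∀ y ∈ O, f^[n₀] y = y := by
      rintro y ⟨i, rfl⟩
      rw [← Function.iterate_add_apply, Nat.add_comm, Function.iterate_add_apply, hn₀v]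
    have c2 : ∀ y ∈ O, f y ≠ y := by
      rintro y ⟨i, rfl⟩ hy
      have hNv : f^[n₀ * (i + 1)] v = v := by
        rw [Function.iterate_mul]
        exact Function.iterate_fixed hn₀v (i + 1)
      have hile : i ≤ n₀ * (i + 1) := by nlinarith [hn₀1]
      have h1 : f^[n₀ * (i + 1) - i + i] v = f^[n₀ * (i + 1) - i] (f^[i] v) :=
        Function.iterate_add_apply f _ i v
      rw [Nat.sub_add_cancel hile, hNv, Function.iterate_fixed hy] at h1
      have hfv : f v = v := by rw [← h1] at hy; exact hy
      have h2 : f^[1] v = v := by rw [Function.iterate_one]; exact hfv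
      exact absurd (hmin 1 le_rfl h2) (by omega)
    have c3 : ∀ y ∈ O, f^[2] y ≠ y := by
      rintro y ⟨i, rfl⟩ hy
      have hNv : f^[n₀ * 2 * (i + 1)] v = v := by
        rw [Function.iterate_mul, Function.iterate_mul]
        exact Function.iterate_fixed (Function.iterate_fixed hn₀v 2) (i + 1)
      have hile : i ≤ n₀ * 2 * (i + 1) := by nlinarith [hn₀1]
      have h1 : f^[n₀ * 2 * (i + 1) - i + i] v = f^[n₀ * 2 * (i + 1) - i] (f^[i] v) :=
        Function.iterate_add_apply f _ i v
      rw [Nat.sub_add_cancel hile, hNv] at h1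
      set d := n₀ * 2 * (i + 1) - i with hd
      have hsplit : f^[d] (f^[i] v) = f^[d % 2] (f^[i] v) := by
        conv_lhs => rw [← Nat.mod_add_div d 2]
        rw [Function.iterate_add_apply]
        congr 1
        rw [Function.iterate_mul]
        exact Function.iterate_fixed hy (d / 2)
      rw [hsplit] at h1
      rcases Nat.mod_two_eq_zero_or_one d with hd2 | hd2 <;> rw [hd2] at h1
      · rw [Function.iterate_zero_apply] at h1
        have h2 : f^[2] v = v := by rw [← h1] at hy; exact hy
        exact absurd (hmin 2 (by omega) h2) (by omega)
      · rw [Function.iterate_one] at h1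
        have h2 : f^[2] v = v := by
          rw [h1]
          have hcomm : f^[2] (f (f^[i] v)) = f (f^[2] (f^[i] v)) := by
            rw [← Function.iterate_succ_apply, Function.iterate_succ_apply']
          rw [hcomm, hy]
        exact absurd (hmin 2 (by omega) h2) (by omega)
    have c4 : ∀ y ∈ O, f^[3] y ≠ f y := by
      intro y hy h
      refine c3 (f y) (hOf y hy) ?_
      rw [← Function.iterate_succ_apply]
      exact h
    have htri : ∀ y : V, (DomSet G y).Nonempty ∨ Ctr G y ∨ Unc G y := by
      intro y
      by_cases h1 : (DomSet G y).Nonempty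
      · exact Or.inl h1
      · by_cases h2 : Qv G y
        · exact Or.inr (Or.inl ⟨h1, h2⟩)
        · exact Or.inr (Or.inr ⟨h1, h2⟩)
    have hnounc : ∀ y ∈ O, ¬Unc G y := fun y hy hu => c2 y hy (fch_unc hu)
    by_cases hctr : ∃ s ∈ O, Ctr G s
    · obtain ⟨s, hsO, hs⟩ := hctr
      by_cases hs1 : ∃ u ∈ G.neighborSet s, Unc G u
      · exact hnounc (f s) (hOf s hsO) (fch_ctr_R1 hs hs1)
      · by_cases hs2 : ∃ u ∈ G.neighborSet s, Ctr G u
        · by_cases hscov : ∃ b, (s, b) ∈ M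
          · have hsM : (s, f s) ∈ M := fch_ctr_cov hM1 hs hs1 hscov
            have hzC : Ctr G (f s) := (hM1 _ hsM).2.1
            have hzcov : ∃ b, (f s, b) ∈ M := ⟨s, hM2 _ hsM⟩
            by_cases hz1 : ∃ u ∈ G.neighborSet (f s), Unc G u
            · exact hnounc (f (f s)) (hOf _ (hOf s hsO)) (fch_ctr_R1 hzC hz1)
            · have hzM : (f s, f (f s)) ∈ M := fch_ctr_cov hM1 hzC hz1 hzcov
              have heq : f (f s) = s := hM3 (f s) (f (f s)) s hzM (hM2 _ hsM)
              refine c3 s hsO ?_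
              rw [show (2 : ℕ) = 1 + 1 from rfl, Function.iterate_add_apply,
                Function.iterate_one]
              exact heq
          · have hu := fch_ctr_unc2 hs hs1 hs2 hscov
            have hadj : G.Adj s (f s) := (G.mem_neighborSet s (f s)).1 hu.1
            have hucov : ∃ c, (f s, c) ∈ M := by
              rcases hMmax s (f s) hs hu.2 hadj with h | h
              · exact absurd h hscov
              · exact h
            by_cases hu1 : ∃ x ∈ G.neighborSet (f s), Unc G x
            · exact hnounc (f (f s)) (hOf _ (hOf s hsO)) (fch_ctr_R1 hu.2 hu1)
            · have huM : (f s, f (f s)) ∈ M := fch_ctr_cov hM1 hu.2 hu1 hucov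
              have hzC : Ctr G (f (f s)) := (hM1 _ huM).2.1
              by_cases hz1 : ∃ x ∈ G.neighborSet (f (f s)), Unc G x
              · exact hnounc (f (f (f s))) (hOf _ (hOf _ (hOf s hsO))) (fch_ctr_R1 hzC hz1)
              · have hzM : (f (f s), f (f (f s))) ∈ M :=
                  fch_ctr_cov hM1 hzC hz1 ⟨f s, hM2 _ huM⟩
                have heq : f (f (f s)) = f s := hM3 _ _ _ hzM (hM2 _ huM)
                refine c4 s hsO ?_
                rw [show (3 : ℕ) = 1 + 1 + 1 from rfl, Function.iterate_add_apply,
                  Function.iterate_add_apply]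
                simp only [Function.iterate_one]
                exact heq
        · -- R3 : all neighbors of s are dominated
          have hfsN : f s ∈ G.neighborSet s := fch_ctr_mem hM1 hs
          have hexm : ∃ t, 1 ≤ t ∧ ¬(DomSet G (f^[t] s)).Nonempty := by
            refine ⟨n₀, hn₀1, ?_⟩
            rw [hOper s hsO]
            exact hs.1
          set m := Nat.find hexm with hmdef
          obtain ⟨hm1, hmD⟩ := Nat.find_spec hexm
          have hDt : ∀ t, 1 ≤ t → t < m → (DomSet G (f^[t] s)).Nonempty := by
            intro t h1t htm
            by_contra hcc
            exact absurd ⟨h1t, hcc⟩ (Nat.find_min hexm htm)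
          have hchain : ∀ t, t + 1 ≤ m →
              G.neighborSet (f s) ⊆ G.neighborSet (f^[t + 1] s) := by
            intro t
            induction t with
            | zero =>
              intro _
              rw [show (0 : ℕ) + 1 = 1 from rfl, Function.iterate_one]
            | succ t ih =>
              intro hle
              have hsub := ih (by omega)
              rw [Function.iterate_succ_apply']
              exact hsub.trans (fch_dom (hDt (t + 1) (by omega) (by omega))).2
          have hsubm : G.neighborSet (f s) ⊆ G.neighborSet (f^[m] s) := by
            have h1 := hchain (m - 1) (by omega)
            rwa [show m - 1 + 1 = m by omega] at h1
          have hs'O : f^[m] s ∈ O := hOit s hsO m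
          have hs'C : Ctr G (f^[m] s) := by
            rcases htri (f^[m] s) with h | h | h
            · exact absurd h hmD
            · exact h
            · exact absurd h (hnounc _ hs'O)
          have hsN : s ∈ G.neighborSet (f s) :=
            (G.mem_neighborSet _ _).2 ((G.mem_neighborSet _ _).1 hfsN).symm
          have hsN' : s ∈ G.neighborSet (f^[m] s) := hsubm hsN
          have hadj : G.Adj s (f^[m] s) := ((G.mem_neighborSet _ _).1 hsN').symm
          exact hs2 ⟨f^[m] s, (G.mem_neighborSet _ _).2 hadj, hs'C⟩
    · push_neg at hctr
      have hallD : ∀ y ∈ O, (DomSet G y).Nonempty := by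
        intro y hy
        rcases htri y with h | h | h
        · exact h
        · exact absurd h (hctr y hy)
        · exact absurd h (hnounc y hy)
      have hmono2 : ∀ y ∈ O, ∀ b, G.neighborSet y ⊆ G.neighborSet (f^[b] y) := by
        intro y hy b
        induction b with
        | zero => exact subset_rfl
        | succ b ih =>
          rw [Function.iterate_succ_apply']
          exact ih.trans (fch_dom (hallD _ (hOit y hy b))).2
      have hNeq : ∀ y ∈ O, G.neighborSet (f y) = G.neighborSet y := by
        intro y hy
        refine Set.Subset.antisymm ?_ (fch_dom (hallD y hy)).2
        have h1 := hmono2 (f y) (hOf y hy) (n₀ - 1)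
        have h2 : f^[n₀ - 1] (f y) = y := by
          have h3 := (Function.iterate_succ_apply f (n₀ - 1) y).symm
          rw [show (n₀ - 1).succ = n₀ by omega] at h3
          rw [h3]
          exact hOper y hy
        rwa [h2] at h1
      have hClit : ∀ i, Cl G (f^[i] v) = Cl G v := by
        intro i
        induction i with
        | zero => rfl
        | succ i ih =>
          rw [Function.iterate_succ_apply', ← ih]
          ext w
          simp only [Cl, Set.mem_setOf_eq]
          rw [hNeq (f^[i] v) (hOit v hvO i)]
      have hCl : ∀ y ∈ O, Cl G y = Cl G v := by rintro y ⟨i, rfl⟩; exact hClit i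
      have htwin : ∀ y ∈ O, ∃ w, w ≠ y ∧ G.neighborSet w = G.neighborSet y :=
        fun y hy => ⟨f y, c2 y hy, hNeq y hy⟩
      have hfpq : ∀ y ∈ O,
          f y = pick (Cl G v) ∨ f y = pick (Cl G v \ {pick (Cl G v)}) := by
        intro y hy
        have h1 := fch_dom_twin (M := M) (hallD y hy) (htwin y hy)
        rwa [hCl y hy] at h1
      have hx1O : f v ∈ O := hOf v hvO
      have hx2O : f (f v) ∈ O := hOf _ hx1O
      have h12 : f (f v) ≠ f v := c2 _ hx1O
      have h23 : f (f (f v)) ≠ f (f v) := c2 _ hx2O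
      have h13 : f (f (f v)) = f v := by
        rcases hfpq v hvO with h1 | h1 <;> rcases hfpq (f v) hx1O with h2 | h2 <;>
          rcases hfpq (f (f v)) hx2O with h3 | h3 <;>
          first
            | (exact h3.trans h1.symm)
            | (exact absurd (h2.trans h1.symm) h12)
            | (exact absurd (h3.trans h2.symm) h23)
      refine c3 (f v) hx1O ?_
      rw [show (2 : ℕ) = 1 + 1 from rfl, Function.iterate_add_apply,
        Function.iterate_one]
      exact h13

omit [Nonempty V] in
lemma absorb {G : SimpleGraph V} (hG : G.CliqueFree 3) {W : Set V}
    (hW : IsMaxBiclique G W) {u w : V} (hu : u ∈ W) (hwu : w ≠ u)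
    (hsub : G.neighborSet u ⊆ G.neighborSet w) : w ∈ W := by
  by_cases hwW : w ∈ W
  · exact hwW
  exfalso
  obtain ⟨⟨S, T, hS, hT, hdisj, huni, hadj, hiS, hiT⟩, hmax⟩ := hW
  have huST : u ∈ S ∪ T := by rw [huni]; exact hu
  rcases huST with huS | huT
  · have hTN : ∀ t ∈ T, t ∈ G.neighborSet w := fun t ht =>
      hsub ((G.mem_neighborSet u t).2 (hadj u huS t ht))
    have hbiq : IsBiclique G (insert w W) := by
      refine ⟨insert w S, T, ⟨w, Set.mem_insert w S⟩, hT, ?_, ?_, ?_, ?_, hiT⟩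
      · rw [Set.disjoint_left]
        intro x hx hxT
        rcases Set.mem_insert_iff.1 hx with rfl | hx'
        · exact hwW (by rw [← huni]; exact Or.inr hxT)
        · exact Set.disjoint_left.1 hdisj hx' hxT
      · rw [Set.insert_union, huni]
      · intro s hs t ht
        rcases Set.mem_insert_iff.1 hs with rfl | hs'
        · exact (G.mem_neighborSet s t).1 (hTN t ht)
        · exact hadj s hs' t ht
      · intro x hx y hy hxy
        rcases Set.mem_insert_iff.1 hx with rfl | hx' <;>
          rcases Set.mem_insert_iff.1 hy with rfl | hy'
        · exact G.irrefl hxy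
        · obtain ⟨t, ht⟩ := hT
          exact no_tri hG hxy ((G.mem_neighborSet x t).1 (hTN t ht)) (hadj y hy' t ht)
        · obtain ⟨t, ht⟩ := hT
          exact no_tri hG hxy.symm ((G.mem_neighborSet y t).1 (hTN t ht)) (hadj x hx' t ht)
        · exact hiS x hx' y hy' hxy
    have heq := hmax (insert w W) hbiq (Set.subset_insert w W)
    refine hwW ?_
    rw [← heq]
    exact Set.mem_insert w W
  · have hSN : ∀ s ∈ S, s ∈ G.neighborSet w := fun s hs =>
      hsub ((G.mem_neighborSet u s).2 (hadj s hs u huT).symm)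
    have hbiq : IsBiclique G (insert w W) := by
      refine ⟨S, insert w T, hS, ⟨w, Set.mem_insert w T⟩, ?_, ?_, ?_, hiS, ?_⟩
      · rw [Set.disjoint_left]
        intro x hxS hxT
        rcases Set.mem_insert_iff.1 hxT with rfl | hxT'
        · exact hwW (by rw [← huni]; exact Or.inl hxS)
        · exact Set.disjoint_left.1 hdisj hxS hxT'
      · rw [Set.union_insert, huni]
      · intro s hs t ht
        rcases Set.mem_insert_iff.1 ht with rfl | ht'
        · exact ((G.mem_neighborSet t s).1 (hSN s hs)).symm
        · exact hadj s hs t ht'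
      · intro x hx y hy hxy
        rcases Set.mem_insert_iff.1 hx with rfl | hx' <;>
          rcases Set.mem_insert_iff.1 hy with rfl | hy'
        · exact G.irrefl hxy
        · obtain ⟨s, hs⟩ := hS
          exact no_tri hG hxy ((G.mem_neighborSet x s).1 (hSN s hs)) ((hadj s hs y hy').symm)
        · obtain ⟨s, hs⟩ := hS
          exact no_tri hG hxy.symm ((G.mem_neighborSet y s).1 (hSN s hs)) ((hadj s hs x hx').symm)
        · exact hiT x hx' y hy' hxy
    have heq := hmax (insert w W) hbiq (Set.subset_insert w W)
    refine hwW ?_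
    rw [← heq]
    exact Set.mem_insert w W

omit [Nonempty V] in
lemma star_eq {G : SimpleGraph V} (hG : G.CliqueFree 3) {W : Set V}
    (hW : IsMaxBiclique G W) (hst : IsStar G W) :
    ∃ c, c ∈ W ∧ W = insert c (G.neighborSet c) := by
  obtain ⟨c, hcW, hne, hadj, hind⟩ := hst
  have hbiq : IsBiclique G (insert c (G.neighborSet c)) := by
    obtain ⟨u, hu⟩ := hne
    refine ⟨{c}, G.neighborSet c, ⟨c, rfl⟩,
      ⟨u, (G.mem_neighborSet c u).2 (hadj u hu)⟩, ?_, ?_, ?_, ?_, ?_⟩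
    · rw [Set.disjoint_singleton_left]
      intro hc
      exact G.irrefl ((G.mem_neighborSet c c).1 hc)
    · rw [Set.singleton_union]
    · intro s hs t ht
      rw [Set.mem_singleton_iff] at hs
      subst hs
      exact (G.mem_neighborSet s t).1 ht
    · intro x hx y hy hxy
      rw [Set.mem_singleton_iff] at hx hy
      subst hx; subst hy
      exact G.irrefl hxy
    · intro x hx y hy hxy
      exact no_tri hG ((G.mem_neighborSet c x).1 hx) ((G.mem_neighborSet c y).1 hy) hxy
  have hsub : W ⊆ insert c (G.neighborSet c) := by
    intro x hx
    by_cases hxc : x = c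
    · rw [hxc]; exact Set.mem_insert c _
    · exact Set.mem_insert_of_mem _ ((G.mem_neighborSet c x).2 (hadj x ⟨hx, hxc⟩))
  have heq := hW.2 _ hbiq hsub
  exact ⟨c, hcW, heq.symm⟩

end Graph

end BCAux

/-- Every triangle-free biclique-dominated graph is biclique 2-choosable. -/
theorem triangleFree_bicliqueDominated_biclique_two_choosable (G : SimpleGraph V)
    (hG : G.CliqueFree 3)
    (hdom : ∀ W, IsMaxBiclique G W → IsStar G W ∨
      ∃ u ∈ W, ∃ w : V, w ≠ u ∧ G.neighborSet u ⊆ G.neighborSet w) :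
    BicliqueChoosable G 2 := by
  classical
  cases isEmpty_or_nonempty V with
  | inl hempty =>
    intro L _
    refine ⟨fun _ => 0, fun v => isEmptyElim v, fun W hW _ => ?_⟩
    obtain ⟨S, T, ⟨s, _⟩, -⟩ := hW.1
    exact isEmptyElim s
  | inr hnon =>
    intro L hL
    -- a maximal matching on adjacent relevant star centers
    set SM : Set (Set (V × V)) :=
      {M | (∀ p ∈ M, BCAux.Ctr G p.1 ∧ BCAux.Ctr G p.2 ∧ G.Adj p.1 p.2) ∧
        (∀ p ∈ M, (p.2, p.1) ∈ M) ∧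
        (∀ a b c : V, (a, b) ∈ M → (a, c) ∈ M → b = c)} with hSMdef
    have hchainM : ∀ c ⊆ SM, IsChain (· ⊆ ·) c → c.Nonempty →
        ∃ ub ∈ SM, ∀ s ∈ c, s ⊆ ub := by
      intro c hcS hch _
      refine ⟨⋃₀ c, ⟨?_, ?_, ?_⟩, fun s hs => Set.subset_sUnion_of_mem hs⟩
      · rintro p ⟨s, hs, hp⟩; exact (hcS hs).1 p hp
      · rintro p ⟨s, hs, hp⟩; exact ⟨s, hs, (hcS hs).2.1 p hp⟩
      · rintro a b d ⟨s, hs, hb⟩ ⟨s', hs', hd⟩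
        rcases hch.total hs hs' with h | h
        · exact (hcS hs').2.2 a b d (h hb) hd
        · exact (hcS hs).2.2 a b d hb (h hd)
    have h₀ : (∅ : Set (V × V)) ∈ SM := by
      refine ⟨?_, ?_, ?_⟩ <;> simp
    obtain ⟨M, -, hMax⟩ := zorn_subset_nonempty SM hchainM ∅ h₀
    obtain ⟨hM1, hM2, hM3⟩ := hMax.1
    have hMmax : ∀ a b : V, BCAux.Ctr G a → BCAux.Ctr G b → G.Adj a b →
        (∃ c, (a, c) ∈ M) ∨ (∃ c, (b, c) ∈ M) := by
      intro a b ha hb hab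
      by_contra hcon
      push_neg at hcon
      obtain ⟨hca, hcb⟩ := hcon
      have habne : a ≠ b := hab.ne
      have hpair : ∀ x y : V, ((x, y) ∈ ({(a, b), (b, a)} : Set (V × V))) ↔
          (x = a ∧ y = b) ∨ (x = b ∧ y = a) := by
        intro x y
        simp [Prod.mk.injEq]
      have hmem : M ∪ {(a, b), (b, a)} ∈ SM := by
        refine ⟨?_, ?_, ?_⟩
        · rintro ⟨x, y⟩ (hp | hp)
          · exact hM1 _ hp
          · rcases (hpair x y).1 hp with ⟨rfl, rfl⟩ | ⟨rfl, rfl⟩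
            · exact ⟨ha, hb, hab⟩
            · exact ⟨hb, ha, hab.symm⟩
        · rintro ⟨x, y⟩ (hp | hp)
          · exact Or.inl (hM2 _ hp)
          · rcases (hpair x y).1 hp with ⟨rfl, rfl⟩ | ⟨rfl, rfl⟩
            · exact Or.inr ((hpair _ _).2 (Or.inr ⟨rfl, rfl⟩))
            · exact Or.inr ((hpair _ _).2 (Or.inl ⟨rfl, rfl⟩))
        · rintro x y z (hy | hy) (hz | hz)
          · exact hM3 x y z hy hz
          · rcases (hpair x z).1 hz with ⟨rfl, rfl⟩ | ⟨rfl, rfl⟩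
            · exact absurd hy (hca y)
            · exact absurd hy (hcb y)
          · rcases (hpair x y).1 hy with ⟨rfl, rfl⟩ | ⟨rfl, rfl⟩
            · exact absurd hz (hca z)
            · exact absurd hz (hcb z)
          · rcases (hpair x y).1 hy with ⟨rfl, rfl⟩ | ⟨rfl, rfl⟩ <;>
              rcases (hpair _ z).1 hz with ⟨h1, rfl⟩ | ⟨h1, rfl⟩
            · rfl
            · exact absurd h1 habne
            · exact absurd h1.symm habne
            · rfl
      have hsubM := hMax.2 hmem Set.subset_union_left
      exact hca b (hsubM (Or.inr (Or.inl rfl)))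
    obtain ⟨ρ, hρL, hρd⟩ := BCAux.dodge (BCAux.fch G M) L hL
      (BCAux.fch_nocycle hM1 hM2 hM3 hMmax)
    refine ⟨ρ, hρL, ?_⟩
    intro W hW hmono
    rcases hdom W hW with hst | ⟨u, huW, w, hwu, hsub⟩
    · obtain ⟨c, hcW, hWeq⟩ := BCAux.star_eq hG hW hst
      by_cases hD : (BCAux.DomSet G c).Nonempty
      · have hfc := BCAux.fch_dom (M := M) hD
        have hfW : BCAux.fch G M c ∈ W := BCAux.absorb hG hW hcW hfc.1 hfc.2
        exact hρd c hfc.1 (hmono c hcW _ hfW)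
      · have hQ : BCAux.Qv G c := by
          unfold BCAux.Qv
          rw [← hWeq]
          exact hW
        have hC : BCAux.Ctr G c := ⟨hD, hQ⟩
        have hm := BCAux.fch_ctr_mem hM1 hC
        have hne2 : BCAux.fch G M c ≠ c := by
          intro h
          rw [h] at hm
          exact G.irrefl ((G.mem_neighborSet c c).1 hm)
        have hfW : BCAux.fch G M c ∈ W := by
          rw [hWeq]
          exact Set.mem_insert_of_mem _ hm
        exact hρd c hne2 (hmono c hcW _ hfW)
    · have hD : (BCAux.DomSet G u).Nonempty := ⟨w, hwu, hsub⟩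
      have hfu := BCAux.fch_dom (M := M) hD
      have hfW := BCAux.absorb hG hW huW hfu.1 hfu.2
      exact hρd u hfu.1 (hmono u huW _ hfW)
end

section
/- The following statements are equivalent for a graph G: (i) G contains no induced W_4, no induced dart, and no induced gem; (ii) every induced diamond of G contains a pair of twin vertices; (iii) every vertex v of G is block separable, i.e., every pair of adjacent vertices w, z ∈ N(v) with neither N[v] ⊆ N[w] nor N[v] ⊆ N[z] are twins in the subgraph of G induced by N[v]. -/
variable {V : Type*}

/-! All three conditions say that the two universal vertices of every induced diamond `abcd` are
twins. No other pair of a diamond can be twins: `d ∈ N[p] \ N[c]` for each vertex `p ≠ c` of it,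
and symmetrically for `d`. A vertex `e ∈ N(a) \ N[b]` extends the diamond to a `W₄`, a gem or a
dart according to its adjacency to `c` and `d`, and each of these three graphs arises in this way.
Such an `e` also shows that `a` is not block separable, as `b` and `c` are then distinguished by
`d`; conversely, if `y ∈ N[v]` is adjacent to `w` but not to `z`, then `v w z y` is a diamond whose
universal vertices are not twins, because `w` does not dominate `v`. -/

section DiamondTwins

variable {G : SimpleGraph V} {a b c d e p q v w x z : V}

def DiamondUniversalsTwin (G : SimpleGraph V) : Prop :=
  ∀ a b c d, IsInducedDiamond G a b c d → Twins G a b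

/-- `e` witnesses that the universal vertex `b` of the diamond `abcd` does not dominate `a`. -/
def IsPrivateNeighbor (G : SimpleGraph V) (a b c d e : V) : Prop :=
  IsInducedDiamond G a b c d ∧ G.Adj a e ∧ e ∉ closedNbhd G b

lemma mem_closedNbhd_iff : x ∈ closedNbhd G v ↔ x = v ∨ G.Adj v x := Iff.rfl

lemma mem_closedNbhd_comm : x ∈ closedNbhd G v ↔ v ∈ closedNbhd G x := by
  simp only [mem_closedNbhd_iff, G.adj_comm, eq_comm]

lemma twinsIn_iff {A : Set V} :
    TwinsIn G A w z ↔ ∀ y ∈ A, (y ∈ closedNbhd G w ↔ y ∈ closedNbhd G z) := by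
  simp only [TwinsIn, mem_closedNbhd_iff, G.adj_comm w, G.adj_comm z]

lemma Twins.symm (h : Twins G p q) : Twins G q p := Eq.symm h

lemma Twins.mem_closedNbhd_iff (h : Twins G p q) :
    x ∈ closedNbhd G p ↔ x ∈ closedNbhd G q := by
  rw [h]

lemma Twins.dominates (h : Twins G p q) : Dominates G q p := h.le

namespace IsInducedDiamond

lemma swap (h : IsInducedDiamond G a b c d) : IsInducedDiamond G b a c d := by
  obtain ⟨hab, hac, had, hbc, hbd, hcd, Aab, Aac, Aad, Abc, Abd, Ncd⟩ := h
  exact ⟨hab.symm, hbc, hbd, hac, had, hcd, Aab.symm, Abc, Abd, Aac, Aad, Ncd⟩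

lemma not_mem_closedNbhd (h : IsInducedDiamond G a b c d) : d ∉ closedNbhd G c := by
  obtain ⟨-, -, -, -, -, hcd, -, -, -, -, -, Ncd⟩ := h
  rintro (hdc | Acd)
  exacts [hcd hdc.symm, Ncd Acd]

lemma twins_of_twins (h : IsInducedDiamond G a b c d)
    (hp : p ∈ ({a, b, c, d} : Set V)) (hq : q ∈ ({a, b, c, d} : Set V)) (hpq : p ≠ q)
    (htw : Twins G p q) : Twins G a b := by
  have hcd : d ∉ closedNbhd G c := h.not_mem_closedNbhd
  have hdc : c ∉ closedNbhd G d := fun hc => hcd (mem_closedNbhd_comm.mp hc)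
  obtain ⟨-, -, -, -, -, -, -, Aac, Aad, Abc, Abd, -⟩ := h
  have not_twins : ∀ p ∈ ({a, b, c, d} : Set V), ∀ q ∈ ({c, d} : Set V), p ≠ q →
      ¬Twins G p q := by
    intro p hp q hq hpq htw
    simp only [Set.mem_insert_iff, Set.mem_singleton_iff] at hp hq
    rcases hq with rfl | rfl
    · refine hcd (htw.mem_closedNbhd_iff.mp ?_)
      rcases hp with rfl | rfl | rfl | rfl
      exacts [Or.inr Aad, Or.inr Abd, absurd rfl hpq, Or.inl rfl]
    · refine hdc (htw.mem_closedNbhd_iff.mp ?_)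
      rcases hp with rfl | rfl | rfl | rfl
      exacts [Or.inr Aac, Or.inr Abc, Or.inl rfl, absurd rfl hpq]
  by_cases hqcd : q ∈ ({c, d} : Set V)
  · exact absurd htw (not_twins p hp q hqcd hpq)
  by_cases hpcd : p ∈ ({c, d} : Set V)
  · exact absurd htw.symm (not_twins q hq p hpcd hpq.symm)
  simp only [Set.mem_insert_iff, Set.mem_singleton_iff] at hp hq hpcd hqcd
  rcases hp with rfl | rfl | rfl | rfl <;> rcases hq with rfl | rfl | rfl | rfl <;>
    first | exact htw | exact htw.symm | tauto

lemma dominates (h : IsInducedDiamond G a b c d)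
    (hfree : ∀ e, ¬IsPrivateNeighbor G a b c d e) : Dominates G b a := by
  obtain ⟨-, -, -, -, -, -, Aab, -⟩ := id h
  rintro x (rfl | Aax)
  · exact Or.inr Aab.symm
  · by_contra hxb
    exact hfree x ⟨h, Aax, hxb⟩

end IsInducedDiamond

namespace IsPrivateNeighbor

lemma hasInducedW4_or_dart_or_gem (h : IsPrivateNeighbor G a b c d e) :
    HasInducedW4 G ∨ HasInducedDart G ∨ HasInducedGem G := by
  obtain ⟨hdm, Aae, heb⟩ := h
  obtain ⟨hab, hac, had, hbc, hbd, hcd, Aab, Aac, Aad, Abc, Abd, Ncd⟩ := id hdm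
  simp only [mem_closedNbhd_iff, not_or] at heb
  obtain ⟨heb, Nbe⟩ := heb
  have hae : a ≠ e := Aae.ne
  have hce : c ≠ e := by rintro rfl; exact Nbe Abc
  have hde : d ≠ e := by rintro rfl; exact Nbe Abd
  by_cases Ace : G.Adj c e <;> by_cases Ade : G.Adj d e
  · exact Or.inl ⟨a, c, e, d, b, by simp [*, Ne.symm], Aac, Aae, Aad, Aab, Ace, Ade.symm,
      Abd.symm, Abc, Ncd, fun h => Nbe h.symm⟩
  · exact Or.inr (Or.inr ⟨a, e, c, b, d, by simp [*, Ne.symm], Aae, Aac, Aab, Aad, Ace.symm,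
      Abc.symm, Abd, fun h => Nbe h.symm, fun h => Ade h.symm, Ncd⟩)
  · exact Or.inr (Or.inr ⟨a, e, d, b, c, by simp [*, Ne.symm], Aae, Aad, Aab, Aac, Ade.symm,
      Abd.symm, Abc, fun h => Nbe h.symm, fun h => Ace h.symm, fun h => Ncd h.symm⟩)
  · exact Or.inr (Or.inl ⟨a, b, c, d, e, by simp [*, Ne.symm], hdm, Aae, Nbe, Ace, Ade⟩)

lemma not_twins (h : IsPrivateNeighbor G a b c d e) : ¬Twins G a b :=
  fun htw => h.2.2 (htw.mem_closedNbhd_iff.mp (Or.inr h.2.1))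

lemma not_blockSeparable (h : IsPrivateNeighbor G a b c d e) : ¬BlockSeparable G a := by
  intro hsep
  obtain ⟨hdm, Aae, heb⟩ := h
  obtain ⟨-, -, -, -, -, -, Aab, Aac, Aad, Abc, Abd, -⟩ := id hdm
  have hbc : TwinsIn G (closedNbhd G a) b c :=
    hsep b Aab c Aac Abc (fun hdom => heb (hdom (Or.inr Aae)))
      (fun hdom => hdm.not_mem_closedNbhd (hdom (Or.inr Aad)))
  exact hdm.not_mem_closedNbhd ((twinsIn_iff.mp hbc d (Or.inr Aad)).mp (Or.inr Abd))

end IsPrivateNeighbor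

lemma hasInducedW4_or_dart_or_gem_iff :
    (HasInducedW4 G ∨ HasInducedDart G ∨ HasInducedGem G) ↔
      ∃ a b c d e, IsPrivateNeighbor G a b c d e := by
  refine ⟨fun h => ?_, fun ⟨a, b, c, d, e, h⟩ => h.hasInducedW4_or_dart_or_gem⟩
  rcases h with ⟨u, a, b, c, d, hne, Aua, Aub, Auc, Aud, Aab, -, -, Ada, Nac, Nbd⟩ |
    ⟨a, b, c, d, e, hne, hdm, Aae, Nbe, -, -⟩ |
    ⟨u, p₁, p₂, p₃, p₄, hne, Au₁, Au₂, Au₃, Au₄, A₁₂, A₂₃, -, N₁₃, -, N₂₄⟩ <;>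
    simp only [List.pairwise_cons, List.mem_cons, List.not_mem_nil, or_false, forall_eq_or_imp,
      forall_eq, IsEmpty.forall_iff, implies_true, List.Pairwise.nil, and_true] at hne
  · obtain ⟨⟨hua, hub, -, hud⟩, ⟨hab, hac, -⟩, ⟨-, hbd⟩, -⟩ := hne
    exact ⟨u, a, b, d, c, ⟨hua, hub, hud, hab, Ada.ne.symm, hbd, Aua, Aub, Aud, Aab,
      Ada.symm, Nbd⟩, Auc, by simp [mem_closedNbhd_iff, Nac, hac.symm]⟩
  · exact ⟨a, b, c, d, e, hdm, Aae, by simp [mem_closedNbhd_iff, Nbe, hne.2.1.2.2.symm]⟩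
  · obtain ⟨⟨hu₁, hu₂, hu₃, -⟩, ⟨h₁₂, h₁₃, -⟩, ⟨h₂₃, h₂₄⟩, -⟩ := hne
    exact ⟨u, p₂, p₁, p₃, p₄, ⟨hu₂, hu₁, hu₃, h₁₂.symm, h₂₃, h₁₃, Au₂, Au₁, Au₃,
      A₁₂.symm, A₂₃, N₁₃⟩, Au₄, by simp [mem_closedNbhd_iff, N₂₄, h₂₄.symm]⟩

lemma forall_not_isPrivateNeighbor_iff :
    (∀ a b c d e, ¬IsPrivateNeighbor G a b c d e) ↔ DiamondUniversalsTwin G := by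
  refine ⟨fun hfree a b c d h => ?_, fun hP a b c d e h => h.not_twins (hP a b c d h.1)⟩
  exact (h.dominates (hfree a b c d)).antisymm (h.swap.dominates (hfree b a c d))

lemma w4_dart_gem_free_iff :
    (¬HasInducedW4 G ∧ ¬HasInducedDart G ∧ ¬HasInducedGem G) ↔ DiamondUniversalsTwin G := by
  rw [← forall_not_isPrivateNeighbor_iff, ← not_or, ← not_or, hasInducedW4_or_dart_or_gem_iff]
  simp only [not_exists]

lemma forall_diamond_exists_twins_iff :
    (∀ a b c d : V, IsInducedDiamond G a b c d →
        ∃ p ∈ ({a, b, c, d} : Set V), ∃ q ∈ ({a, b, c, d} : Set V), p ≠ q ∧ Twins G p q) ↔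
      DiamondUniversalsTwin G := by
  refine ⟨fun hB a b c d h => ?_, fun hP a b c d h => ⟨a, by simp, b, by simp, h.1, hP a b c d h⟩⟩
  obtain ⟨p, hp, q, hq, hpq, htw⟩ := hB a b c d h
  exact h.twins_of_twins hp hq hpq htw

lemma DiamondUniversalsTwin.blockSeparable (hP : DiamondUniversalsTwin G) (v : V) :
    BlockSeparable G v := by
  intro w hw z hz Awz hdw hdz
  rw [twinsIn_iff]
  intro y hy
  have half : ∀ w z, G.Adj v w → G.Adj v z → G.Adj w z → ¬Dominates G w v →
      y ∈ closedNbhd G w → y ∈ closedNbhd G z := by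
    intro w z Avw Avz Awz hdw hyw
    by_contra hyz
    simp only [mem_closedNbhd_iff, not_or] at hyz hyw hy
    obtain ⟨hyz, Nzy⟩ := hyz
    have Avy : G.Adj v y := hy.resolve_left (by rintro rfl; exact Nzy Avz.symm)
    have Awy : G.Adj w y := hyw.resolve_left (by rintro rfl; exact Nzy Awz.symm)
    exact hdw (hP v w z y ⟨Avw.ne, Avz.ne, Avy.ne, Awz.ne, Awy.ne, Ne.symm hyz, Avw, Avz, Avy,
      Awz, Awy, Nzy⟩).dominates
  exact ⟨half w z hw hz Awz hdw, half z w hz hw Awz.symm hdz⟩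

lemma forall_blockSeparable_iff : (∀ v, BlockSeparable G v) ↔ DiamondUniversalsTwin G := by
  refine ⟨fun hC => forall_not_isPrivateNeighbor_iff.mp ?_, DiamondUniversalsTwin.blockSeparable⟩
  exact fun a b c d e h => h.not_blockSeparable (hC a)

end DiamondTwins

/-- `{W₄, dart, gem}`-free graphs are exactly those in which every induced
diamond has twins, and exactly those whose every vertex is block separable. -/
theorem w4_dart_gem_free_characterization (G : SimpleGraph V) :
    ((¬HasInducedW4 G ∧ ¬HasInducedDart G ∧ ¬HasInducedGem G) ↔
      (∀ a b c d : V, IsInducedDiamond G a b c d →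
        ∃ p ∈ ({a, b, c, d} : Set V), ∃ q ∈ ({a, b, c, d} : Set V), p ≠ q ∧ Twins G p q)) ∧
    ((∀ a b c d : V, IsInducedDiamond G a b c d →
        ∃ p ∈ ({a, b, c, d} : Set V), ∃ q ∈ ({a, b, c, d} : Set V), p ≠ q ∧ Twins G p q) ↔
      (∀ v : V, BlockSeparable G v)) := by
  rw [w4_dart_gem_free_iff, forall_diamond_exists_twins_iff, forall_blockSeparable_iff]
  exact ⟨Iff.rfl, Iff.rfl⟩
end
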